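/- arXiv:math/0408004 — 10 statements merged into one kernel-verified Lean document; each statement's English description precedes it below -/
import Mathlib

section
/- In a Hilbert space with orthonormal basis (e_n), the sequence of one-dimensional subspaces X_n = span{e_1 + e_{n+1}/n} is a DDD (total and minimal) but fails the skipped-blocking condition: no blocking of (X_n) forms a finite-dimensional decomposition of its span, because ∩_n [X_m]_{m≥n} = span{e_1} ≠ {0}. -/
/-!
The vectors `tilted e n = e 0 + e (n + 1) / (n + 1)` converge to `e 0`, so `e 0` lies in the
closed span of every tail of `(X n)` and of every blocking of it. On the other hand
`⟪e (k + 1), ·⟫` vanishes on every `X j` with `j ≠ k`. This gives minimality, shows that the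
closed tails meet in `span {e 0}`, and, for a blocking, forces every block component of an
expansion of `e 0` to vanish, which is absurd.
-/

open Submodule Set Filter Topology

variable {E : Type*} [NormedAddCommGroup E] [NormedSpace ℝ E]

/-- A sequence of subspaces is a DDD: finite-dimensional, total and minimal. -/
def IsDDD (X : ℕ → Submodule ℝ E) : Prop :=
  (∀ n, FiniteDimensional ℝ (X n)) ∧
  (⨆ n, X n).topologicalClosure = ⊤ ∧
  ∀ n, X n ⊓ (⨆ m ∈ {m | m ≠ n}, X m).topologicalClosure = ⊥

/-- `(W i)` is a finite-dimensional decomposition of its closed linear span: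
every element of the closed span is the limit of partial sums of a unique
sequence of vectors `w i ∈ W i`. -/
def IsFDDof (W : ℕ → Submodule ℝ E) : Prop :=
  ∀ x ∈ (⨆ i, W i).topologicalClosure, ∃! w : ℕ → E,
    (∀ i, w i ∈ W i) ∧
      Filter.Tendsto (fun N => ∑ i ∈ Finset.range N, w i) Filter.atTop (nhds x)

/-- Skipped blocking decomposition: a DDD such that every skipped sequence of
blocks is an FDD of its closed linear span. -/
def IsSBD (X : ℕ → Submodule ℝ E) : Prop :=
  IsDDD X ∧ ∀ n m : ℕ → ℕ, (∀ i, n i ≤ m i) → (∀ i, m i + 1 < n (i + 1)) →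
    IsFDDof (fun i => ⨆ j ∈ Set.Icc (n i) (m i), X j)

/-- Minimal f.d. sequence which is a skipped blocking decomposition of its closed span. -/
def IsSBDofSpan (W : ℕ → Submodule ℝ E) : Prop :=
  (∀ n, FiniteDimensional ℝ (W n)) ∧
  (∀ n, W n ⊓ (⨆ m ∈ {m | m ≠ n}, W m).topologicalClosure = ⊥) ∧
  ∀ n m : ℕ → ℕ, (∀ i, n i ≤ m i) → (∀ i, m i + 1 < n (i + 1)) →
    IsFDDof (fun i => ⨆ j ∈ Set.Icc (n i) (m i), W j)

/-- Norm of the skipped projection `R_{m,k}` onto `X[0,m)` with kernel the closed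
span of the tail `X[k+1,∞)` (the spaces `X_m, …, X_k` are skipped). -/
noncomputable def skippedNorm (X : ℕ → Submodule ℝ E) (m k : ℕ) : ℝ :=
  sInf {C : ℝ | 0 ≤ C ∧ ∀ a ∈ (⨆ i ∈ Set.Iio m, X i),
    ∀ b ∈ (⨆ i ∈ Set.Ici (k + 1), X i).topologicalClosure, ‖a‖ ≤ C * ‖a + b‖}

/-- Annihilator of a subspace in the continuous dual. -/
noncomputable def ann {F : Type*} [NormedAddCommGroup F] [NormedSpace ℝ F] (S : Submodule ℝ F) :
    Submodule ℝ (F →L[ℝ] ℝ) where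
  carrier := {f | ∀ x ∈ S, f x = 0}
  add_mem' := by intro f g hf hg x hx; simp [hf x hx, hg x hx]
  zero_mem' := by intro x hx; simp
  smul_mem' := by intro c f hf x hx; simp [hf x hx]

/-- The predecomposition space `Y = [X_n^*]` of a DDD, where
`X_n^* = [X_m]^⊥_{m ≠ n}`. -/
noncomputable def predecomp (X : ℕ → Submodule ℝ E) : Submodule ℝ (E →L[ℝ] ℝ) :=
  (⨆ n, ann ((⨆ m ∈ {m | m ≠ n}, X m).topologicalClosure)).topologicalClosure

/-- A sequence of subspaces is boundedly complete: boundedness of the partial sums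
of a sequence of vectors from the subspaces implies norm convergence. -/
def IsBddCompl (W : ℕ → Submodule ℝ E) : Prop :=
  ∀ v : ℕ → E, (∀ i, v i ∈ W i) →
    BddAbove (Set.range fun N => ‖∑ i ∈ Finset.range N, v i‖) →
    ∃ s : E, Filter.Tendsto (fun N => ∑ i ∈ Finset.range N, v i) Filter.atTop (nhds s)

/-- A Schauder basis of `E`. -/
def IsSchauderBasis (e : ℕ → E) : Prop :=
  ∀ x : E, ∃! a : ℕ → ℝ,
    Filter.Tendsto (fun N => ∑ i ∈ Finset.range N, a i • e i) Filter.atTop (nhds x)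

open RealInnerProductSpace

lemma ContinuousLinearMap.map_eq_of_tendsto_sum_range {R E F : Type*} [Semiring R]
    [TopologicalSpace E] [AddCommMonoid E] [Module R E]
    [TopologicalSpace F] [AddCommMonoid F] [Module R F] [T2Space F]
    (φ : E →L[R] F) {w : ℕ → E} {x : E}
    (hw : Tendsto (fun N => ∑ i ∈ Finset.range N, w i) atTop (𝓝 x))
    {i : ℕ} (hφ : ∀ j ≠ i, φ (w j) = 0) : φ (w i) = φ x := by
  have hsum : Tendsto (fun N => ∑ j ∈ Finset.range N, φ (w j)) atTop (𝓝 (φ x)) := by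
    simpa only [map_sum, Function.comp_def] using (φ.continuous.tendsto x).comp hw
  exact tendsto_nhds_unique (hasSum_single i hφ).tendsto_sum_nat hsum

section InnerProductSpace

variable {H : Type*} [NormedAddCommGroup H] [InnerProductSpace ℝ H]

lemma Orthonormal.eq_inner_smul_of_inner_eq_zero {ι : Type*} {e : ι → H} (he : Orthonormal ℝ e)
    (htot : (span ℝ (range e)).topologicalClosure = ⊤) {i₀ : ι} {x : H}
    (hx : ∀ i ≠ i₀, ⟪e i, x⟫ = 0) : x = ⟪e i₀, x⟫ • e i₀ := by
  classical
  have horth : ∀ i, ⟪e i, x - ⟪e i₀, x⟫ • e i₀⟫ = 0 := by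
    intro i
    rw [inner_sub_right, real_inner_smul_right, orthonormal_iff_ite.mp he]
    by_cases h : i = i₀
    · subst h; simp
    · simp [h, hx i h]
  have hle : span ℝ (range e) ≤ (ℝ ∙ (x - ⟪e i₀, x⟫ • e i₀))ᗮ :=
    span_le.mpr <| range_subset_iff.mpr fun i =>
      mem_orthogonal_singleton_iff_inner_left.mpr (horth i)
  rw [← sub_eq_zero]
  exact (dense_iff_topologicalClosure_eq_top.mpr htot).eq_zero_of_inner_right ℝ
    fun v hv => mem_orthogonal_singleton_iff_inner_left.mp (hle hv)

variable {e : ℕ → H}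

noncomputable def tilted (e : ℕ → H) (n : ℕ) : H := e 0 + ((n : ℝ) + 1)⁻¹ • e (n + 1)

lemma inner_tilted (he : Orthonormal ℝ e) (k n : ℕ) :
    ⟪e (k + 1), tilted e n⟫ = if n = k then ((n : ℝ) + 1)⁻¹ else 0 := by
  rw [tilted, inner_add_right, real_inner_smul_right, orthonormal_iff_ite.mp he,
    orthonormal_iff_ite.mp he]
  by_cases h : n = k
  · subst h; simp
  · simp [h, Ne.symm h]

lemma tendsto_tilted (he : Orthonormal ℝ e) : Tendsto (tilted e) atTop (𝓝 (e 0)) := by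
  have hcoef : Tendsto (fun n : ℕ => ((n : ℝ) + 1)⁻¹) atTop (𝓝 0) := by
    simpa only [one_div] using tendsto_one_div_add_atTop_nhds_zero_nat (𝕜 := ℝ)
  rw [tendsto_iff_norm_sub_tendsto_zero]
  simpa [tilted, norm_smul, he.1, abs_of_pos (Nat.cast_add_one_pos (α := ℝ) _)] using hcoef

lemma eq_top_of_forall_tilted_mem (he : Orthonormal ℝ e)
    (htot : (span ℝ (range e)).topologicalClosure = ⊤) {S : Submodule ℝ H}
    (hS : IsClosed (S : Set H)) (hf : ∀ n, tilted e n ∈ S) : S = ⊤ := by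
  have he0 : e 0 ∈ S := hS.mem_of_tendsto (tendsto_tilted he) (Eventually.of_forall hf)
  have he_mem : ∀ n, e n ∈ S := by
    rintro (_ | n)
    · exact he0
    · have : e (n + 1) = ((n : ℝ) + 1) • (tilted e n - e 0) := by
        rw [tilted, add_sub_cancel_left, smul_smul, mul_inv_cancel₀ (Nat.cast_add_one_ne_zero n),
          one_smul]
      rw [this]
      exact S.smul_mem _ (S.sub_mem (hf n) he0)
  rw [eq_top_iff, ← htot]
  exact topologicalClosure_minimal _ (span_le.mpr (range_subset_iff.mpr he_mem)) hS

lemma closure_iSup_span_tilted_le_orthogonal (he : Orthonormal ℝ e) {S : Set ℕ} {k : ℕ}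
    (hk : k ∉ S) : (⨆ j ∈ S, ℝ ∙ tilted e j).topologicalClosure ≤ (ℝ ∙ e (k + 1))ᗮ := by
  refine topologicalClosure_minimal _ (iSup₂_le fun j hj => ?_) (isClosed_orthogonal _)
  rw [span_singleton_le_iff_mem, mem_orthogonal_singleton_iff_inner_right, inner_tilted he,
    if_neg (ne_of_mem_of_not_mem hj hk)]

lemma eq_zero_of_mem_span_tilted (he : Orthonormal ℝ e) {v : H}
    (hv : v ∈ span ℝ (range (tilted e))) (h : ∀ k, ⟪e (k + 1), v⟫ = 0) : v = 0 := by
  obtain ⟨c, rfl⟩ := Finsupp.mem_span_range_iff_exists_finsupp.mp hv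
  have hc : c = 0 := by
    ext k
    have := h k
    simp only [Finsupp.sum, inner_sum, real_inner_smul_right, inner_tilted he, mul_ite,
      mul_zero, Finset.sum_ite_eq', Finsupp.mem_support_iff] at this
    simpa [Nat.cast_add_one_ne_zero] using this
  simp [hc]

theorem isDDD_span_tilted (he : Orthonormal ℝ e)
    (htot : (span ℝ (range e)).topologicalClosure = ⊤) : IsDDD fun n => ℝ ∙ tilted e n := by
  refine ⟨fun n => inferInstance, ?_, fun n => ?_⟩
  · exact eq_top_of_forall_tilted_mem he htot (isClosed_topologicalClosure _)
      fun n => le_topologicalClosure _ (mem_iSup_of_mem n (mem_span_singleton_self _))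
  · rw [eq_bot_iff]
    rintro x ⟨hxn, hxrest⟩
    obtain ⟨c, rfl⟩ := mem_span_singleton.mp hxn
    have h := mem_orthogonal_singleton_iff_inner_right.mp
      (closure_iSup_span_tilted_le_orthogonal he (S := {m | m ≠ n}) (k := n) (by simp) hxrest)
    rw [real_inner_smul_right, inner_tilted he, if_pos rfl] at h
    simp [(mul_eq_zero.mp h).resolve_right (inv_ne_zero (Nat.cast_add_one_ne_zero n))]

theorem not_isFDDof_blocks_span_tilted (he : Orthonormal ℝ e) {m : ℕ → ℕ} (hm : StrictMono m) :
    ¬ IsFDDof fun i => ⨆ j ∈ Ico (m i) (m (i + 1)), ℝ ∙ tilted e j := by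
  intro hFDD
  have he0 : e 0 ∈ (⨆ i, ⨆ j ∈ Ico (m i) (m (i + 1)), ℝ ∙ tilted e j).topologicalClosure :=
    mem_closure_of_tendsto ((tendsto_tilted he).comp hm.tendsto_atTop)
      (Eventually.of_forall fun i => mem_iSup_of_mem i (mem_iSup_of_mem (m i)
        (mem_iSup_of_mem ⟨le_rfl, hm (Nat.lt_succ_self i)⟩ (mem_span_singleton_self _))))
  obtain ⟨w, ⟨hw, hlim⟩, -⟩ := hFDD (e 0) he0
  have hcoord : ∀ i k, ⟪e (k + 1), w i⟫ = 0 := by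
    intro i k
    have hout : ∀ j, k ∉ Ico (m j) (m (j + 1)) → ⟪e (k + 1), w j⟫ = 0 := fun j hkj =>
      mem_orthogonal_singleton_iff_inner_right.mp
        (closure_iSup_span_tilted_le_orthogonal he hkj (le_topologicalClosure _ (hw j)))
    by_cases hki : k ∈ Ico (m i) (m (i + 1))
    · have := (innerSL ℝ (e (k + 1))).map_eq_of_tendsto_sum_range hlim (i := i) fun j hji =>
        hout j fun hkj =>
          Set.disjoint_left.mp (hm.monotone.pairwise_disjoint_on_Ico_succ hji) hkj hki
      simpa [he.inner_eq_zero (Nat.succ_ne_zero k)] using this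
    · exact hout i hki
  have hw0 : ∀ i, w i = 0 := fun i => eq_zero_of_mem_span_tilted he
    (iSup₂_le (fun j _ => span_mono (singleton_subset_iff.mpr (mem_range_self j))) (hw i))
    (hcoord i)
  simp only [hw0, Finset.sum_const_zero] at hlim
  exact he.ne_zero 0 (tendsto_nhds_unique tendsto_const_nhds hlim).symm

theorem iInf_closure_iSup_Ici_span_tilted (he : Orthonormal ℝ e)
    (htot : (span ℝ (range e)).topologicalClosure = ⊤) :
    ⨅ n, (⨆ j ∈ Ici n, ℝ ∙ tilted e j).topologicalClosure = ℝ ∙ e 0 := by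
  apply le_antisymm
  · intro x hx
    have hperp : ∀ i ≠ 0, ⟪e i, x⟫ = 0 := by
      rintro (_ | k) hk
      · contradiction
      · exact mem_orthogonal_singleton_iff_inner_right.mp
          (closure_iSup_span_tilted_le_orthogonal he (S := Ici (k + 1)) (by simp)
            ((mem_iInf _).mp hx (k + 1)))
    rw [he.eq_inner_smul_of_inner_eq_zero htot hperp]
    exact smul_mem _ _ (mem_span_singleton_self _)
  · refine le_iInf fun n => span_le.mpr (singleton_subset_iff.mpr ?_)
    exact mem_closure_of_tendsto (tendsto_tilted he) (eventually_atTop.mpr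
      ⟨n, fun j hj => mem_iSup_of_mem j (mem_iSup_of_mem hj (mem_span_singleton_self _))⟩)

end InnerProductSpace

theorem stmt1_general {H : Type*} [NormedAddCommGroup H] [InnerProductSpace ℝ H]
    (e : ℕ → H) (he : Orthonormal ℝ e)
    (htot : (Submodule.span ℝ (Set.range e)).topologicalClosure = ⊤)
    (X : ℕ → Submodule ℝ H)
    (hXdef : ∀ n, X n = Submodule.span ℝ {e 0 + ((n : ℝ) + 1)⁻¹ • e (n + 1)}) :
    IsDDD X ∧
    (∀ m : ℕ → ℕ, m 0 = 0 → StrictMono m →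
      ¬ IsFDDof (fun i => ⨆ j ∈ Set.Ico (m i) (m (i + 1)), X j)) ∧
    (⨅ n, (⨆ j ∈ Set.Ici n, X j).topologicalClosure) = Submodule.span ℝ {e 0} ∧
    Submodule.span ℝ {e 0} ≠ (⊥ : Submodule ℝ H) := by
  obtain rfl : X = fun n => ℝ ∙ tilted e n := funext hXdef
  exact ⟨isDDD_span_tilted he htot, fun m _ hm => not_isFDDof_blocks_span_tilted he hm,
    iInf_closure_iSup_Ici_span_tilted he htot, mt span_singleton_eq_bot.mp (he.ne_zero 0)⟩

/-- In a Hilbert space with orthonormal basis `(e n)`, the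
one-dimensional subspaces `X n = span {e 0 + e (n+1)/(n+1)}` form a DDD which is
total and minimal, but no blocking of `(X n)` is an FDD of its closed span,
because `⋂ n [X m]_{m ≥ n} = span {e 0} ≠ {0}`. -/
theorem stmt1 {H : Type*} [NormedAddCommGroup H] [InnerProductSpace ℝ H] [CompleteSpace H]
    (e : ℕ → H) (he : Orthonormal ℝ e)
    (htot : (Submodule.span ℝ (Set.range e)).topologicalClosure = ⊤)
    (X : ℕ → Submodule ℝ H)
    (hXdef : ∀ n, X n = Submodule.span ℝ {e 0 + ((n : ℝ) + 1)⁻¹ • e (n + 1)}) :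
    IsDDD X ∧
    (∀ m : ℕ → ℕ, m 0 = 0 → StrictMono m →
      ¬ IsFDDof (fun i => ⨆ j ∈ Set.Ico (m i) (m (i + 1)), X j)) ∧
    (⨅ n, (⨆ j ∈ Set.Ici n, X j).topologicalClosure) = Submodule.span ℝ {e 0} ∧
    Submodule.span ℝ {e 0} ≠ (⊥ : Submodule ℝ H) :=
  stmt1_general e he htot X hXdef
end

section
/- In a Hilbert space with orthonormal basis (e_n), let X_n = span{e_n} for n odd and X_n = span{e_{n-1} + e_n/n} for n even. Then (X_n) is a skipped-blocking decomposition with constant 1 (every skipped projection R_n has norm 1), but the projections p_n onto X_n along the span of the remaining spaces satisfy ‖p_{2n}‖ ≥ 2n − 1 eventually, so (X_n) is not an FDD. -/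
open Submodule Set Filter Topology

variable {E : Type*} [NormedAddCommGroup E] [NormedSpace ℝ E]

/-!
Each `X n` lies in the span of `e (n - 1)` and `e n`. Hence blocks of consecutive spaces separated
by a skipped index live on disjoint sets of coordinates and are mutually orthogonal, and
orthogonal finite-dimensional blocks always form an FDD; for the same reason the head and the tail
of a skipped projection are orthogonal, which gives constant 1. Minimality comes from the
functionals `⟪skewDual e n, ·⟫`, biorthogonal to the generators up to nonzero factors.

For even `n`, `e n = n • (e (n - 1) + e n / n) - n • e (n - 1)` is sent by `p n` to
`n • (e (n - 1) + e n / n)`, of norm at least `n`. Finally, an FDD expansion of `∑ j, e j / j`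
would be forced to have `n`-th term `e (n - 1) + e n / n` for every even `n`, and these terms do
not tend to zero.
-/

open scoped RealInnerProductSpace

theorem apply_eq_of_tendsto_sum {F : Type*} [NormedAddCommGroup F] [NormedSpace ℝ F]
    (f : E →L[ℝ] F) {w : ℕ → E} {x : E}
    (hx : Tendsto (fun N => ∑ i ∈ Finset.range N, w i) atTop (𝓝 x)) {k : ℕ}
    (hf : ∀ i ≠ k, f (w i) = 0) : f (w k) = f x := by
  have hconst : ∀ᶠ N in atTop, f (∑ i ∈ Finset.range N, w i) = f (w k) := by
    filter_upwards [eventually_gt_atTop k] with N hN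
    rw [map_sum, Finset.sum_eq_single_of_mem k (Finset.mem_range.mpr hN) fun i _ hi => hf i hi]
  exact tendsto_nhds_unique (tendsto_const_nhds.congr' (hconst.mono fun _ h => h.symm))
    ((f.continuous.tendsto x).comp hx)

theorem tendsto_zero_of_tendsto_sum {G : Type*} [NormedAddCommGroup G] {w : ℕ → G} {x : G}
    (hx : Tendsto (fun N => ∑ i ∈ Finset.range N, w i) atTop (𝓝 x)) :
    Tendsto w atTop (𝓝 0) := by
  have h := (hx.comp (tendsto_add_atTop_nat 1)).sub hx
  simpa only [Function.comp_def, Finset.sum_range_succ, add_sub_cancel_left, sub_self] using h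

theorem inf_topologicalClosure_biSup_ne_eq_bot {X : ℕ → Submodule ℝ E} {n : ℕ}
    (f : E →L[ℝ] ℝ) (hf : ∀ m ≠ n, X m ≤ LinearMap.ker (f : E →ₗ[ℝ] ℝ))
    (hn : Disjoint (X n) (LinearMap.ker (f : E →ₗ[ℝ] ℝ))) :
    X n ⊓ (⨆ m ∈ {m | m ≠ n}, X m).topologicalClosure = ⊥ := by
  have hle :
      (⨆ m ∈ {m | m ≠ n}, X m).topologicalClosure ≤ LinearMap.ker (f : E →ₗ[ℝ] ℝ) :=
    topologicalClosure_minimal _ (iSup₂_le hf) f.isClosed_ker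
  exact (hn.mono_right hle).eq_bot

theorem add_one_lt_of_skipped {n m : ℕ → ℕ} (hnm : ∀ i, n i ≤ m i)
    (hskip : ∀ i, m i + 1 < n (i + 1)) {i j : ℕ} (hij : i < j) : m i + 1 < n j := by
  induction j, hij using Nat.le_induction with
  | base => exact hskip i
  | succ j _ ih => have := hnm j; have := hskip j; omega

section Orthogonal

variable {H : Type*} [NormedAddCommGroup H] [InnerProductSpace ℝ H]

theorem norm_le_norm_add_of_inner_eq_zero {a b : H} (h : ⟪a, b⟫ = 0) :
    ‖a‖ ≤ ‖a + b‖ := by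
  refine (mul_self_le_mul_self_iff (norm_nonneg _) (norm_nonneg _)).mpr ?_
  rw [norm_add_sq_eq_norm_sq_add_norm_sq_real h]
  exact le_add_of_nonneg_right (mul_self_nonneg _)

theorem Orthonormal.isOrtho_span_image {e : ℕ → H} (he : Orthonormal ℝ e) {s t : Set ℕ}
    (hst : Disjoint s t) : span ℝ (e '' s) ⟂ span ℝ (e '' t) := by
  rw [isOrtho_span]
  rintro _ ⟨i, hi, rfl⟩ _ ⟨j, hj, rfl⟩
  exact he.2 (hst.ne_of_mem hi hj)

variable {W : ℕ → Submodule ℝ H}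

theorem sum_starProjection_eq_starProjection_finset_sup (hW : Pairwise fun i j => W i ⟂ W j)
    [∀ i, FiniteDimensional ℝ (W i)] (s : Finset ℕ) (x : H) :
    ∑ i ∈ s, (W i).starProjection x = (s.sup W).starProjection x := by
  classical
  refine (eq_starProjection_of_mem_of_inner_eq_zero
    (sum_mem fun i hi => Finset.le_sup (f := W) hi (coe_mem _)) fun z hz => ?_).symm
  suffices s.sup W ≤ (ℝ ∙ (x - ∑ i ∈ s, (W i).starProjection x))ᗮ from
    mem_orthogonal_singleton_iff_inner_right.mp (this hz)
  refine Finset.sup_le fun j hj z hz => mem_orthogonal_singleton_iff_inner_right.mpr ?_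
  rw [← Finset.add_sum_erase s _ hj, ← sub_sub]
  refine inner_eq_zero_symm.mp ((mem_orthogonal _ _).mp ?_ z hz)
  exact sub_mem (sub_starProjection_mem_orthogonal x) (sum_mem fun i hi =>
    hW (Finset.ne_of_mem_erase hi) (coe_mem _))

theorem isFDDof_of_pairwise_isOrtho [CompleteSpace H] (hW : Pairwise fun i j => W i ⟂ W j)
    [∀ i, FiniteDimensional ℝ (W i)] : IsFDDof W := by
  intro x hx
  refine ⟨fun i => (W i).starProjection x, ⟨fun i => coe_mem _, ?_⟩, ?_⟩
  · have hmono : Monotone fun N => (Finset.range N).sup W := fun _ _ h =>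
      Finset.sup_mono (Finset.range_subset_range.mpr h)
    have hsup : ⨆ N, (Finset.range N).sup W = ⨆ i, W i :=
      le_antisymm (iSup_le fun N => Finset.sup_le fun i _ => le_iSup W i)
        (iSup_le fun i => le_iSup_of_le (i + 1) (Finset.le_sup (Finset.self_mem_range_succ i)))
    have : CompleteSpace (⨆ i, W i).topologicalClosure :=
      (isClosed_topologicalClosure _).completeSpace_coe
    simp_rw [sum_starProjection_eq_starProjection_finset_sup hW]
    convert starProjection_tendsto_closure_iSup _ hmono x
    rw [hsup, starProjection_eq_self_iff.mpr hx]
  · rintro w ⟨hw, hlim⟩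
    funext j
    rw [← starProjection_eq_self_iff.mpr (hw j)]
    exact apply_eq_of_tendsto_sum (W j).starProjection hlim fun i hi =>
      ((W j).starProjection_apply_eq_zero_iff).mpr (hW hi (hw i))

end Orthogonal

section SkewExample

variable {H : Type*} [NormedAddCommGroup H] [InnerProductSpace ℝ H] {e : ℕ → H}

/-- Since `0 - 1 = 0` in `ℕ` and `(0 : ℝ)⁻¹ = 0`, `skewVec e 0 = e 0`. -/
noncomputable def skewVec (e : ℕ → H) (n : ℕ) : H :=
  if Odd n then e n else e (n - 1) + (n : ℝ)⁻¹ • e n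

def skewSpace (e : ℕ → H) (n : ℕ) : Submodule ℝ H := span ℝ {skewVec e n}

noncomputable def skewDual (e : ℕ → H) (n : ℕ) : H :=
  if Odd n then e n - ((n : ℝ) + 1) • e (n + 1) else e n

theorem skewVec_of_odd {n : ℕ} (hn : Odd n) : skewVec e n = e n := if_pos hn

theorem skewVec_of_even {n : ℕ} (hn : Even n) :
    skewVec e n = e (n - 1) + (n : ℝ)⁻¹ • e n :=
  if_neg (Nat.not_odd_iff_even.mpr hn)

theorem natCast_smul_skewVec {n : ℕ} (hn : Even n) (hn0 : n ≠ 0) :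
    (n : ℝ) • skewVec e n = (n : ℝ) • e (n - 1) + e n := by
  rw [skewVec_of_even hn, smul_add, smul_smul, mul_inv_cancel₀ (Nat.cast_ne_zero.mpr hn0),
    one_smul]

theorem inner_skewVec_eq_zero (he : Orthonormal ℝ e) {k m : ℕ} (h₁ : k ≠ m - 1)
    (h₂ : k ≠ m) : ⟪e k, skewVec e m⟫ = 0 := by
  unfold skewVec
  split_ifs
  · exact he.2 h₂
  · rw [inner_add_right, real_inner_smul_right, he.2 h₁, he.2 h₂, mul_zero, add_zero]

theorem inner_skewVec_of_even_of_ne (he : Orthonormal ℝ e) {k n : ℕ} (hk : Even k)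
    (hkn : k ≠ n) : ⟪e k, skewVec e n⟫ = 0 := by
  rcases Nat.even_or_odd n with hn | hn
  · exact inner_skewVec_eq_zero he (by rw [Nat.even_iff] at hk hn; omega) hkn
  · rw [skewVec_of_odd hn]
    exact he.2 hkn

theorem inner_skewVec_self_of_even (he : Orthonormal ℝ e) {k : ℕ} (hk : Even k)
    (hk0 : k ≠ 0) : ⟪e k, skewVec e k⟫ = (k : ℝ)⁻¹ := by
  rw [skewVec_of_even hk, inner_add_right, real_inner_smul_right, he.2 (by omega : k ≠ k - 1),
    real_inner_self_eq_norm_sq, he.1 k]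
  ring

theorem inner_pred_skewVec_of_even (he : Orthonormal ℝ e) {n : ℕ} (hn : Even n) :
    ⟪e (n - 1), skewVec e n⟫ = 1 := by
  rw [skewVec_of_even hn, inner_add_right, real_inner_smul_right, real_inner_self_eq_norm_sq,
    he.1]
  rcases eq_or_ne n 0 with rfl | hn0
  · simp
  · rw [he.2 (by omega : n - 1 ≠ n)]
    ring

theorem one_le_norm_skewVec_of_even (he : Orthonormal ℝ e) {n : ℕ} (hn : Even n) :
    1 ≤ ‖skewVec e n‖ := by
  simpa [inner_pred_skewVec_of_even he hn, he.1] using real_inner_le_norm (e (n - 1)) (skewVec e n)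

theorem inner_skewDual_skewVec_of_ne (he : Orthonormal ℝ e) {m n : ℕ} (hmn : m ≠ n) :
    ⟪skewDual e n, skewVec e m⟫ = 0 := by
  unfold skewDual
  split_ifs with hn
  · rw [inner_sub_left, real_inner_smul_left]
    by_cases hm : m = n + 1
    · subst hm
      rw [skewVec_of_even hn.add_one, Nat.add_sub_cancel, inner_add_right, inner_add_right,
        real_inner_smul_right, real_inner_smul_right, he.2 (by omega : n + 1 ≠ n),
        he.2 (by omega : n ≠ n + 1), real_inner_self_eq_norm_sq, real_inner_self_eq_norm_sq,
        he.1, he.1]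
      push_cast
      field_simp
      ring
    · rw [Nat.odd_iff] at hn
      rw [inner_skewVec_eq_zero he (by omega) hmn.symm,
        inner_skewVec_of_even_of_ne he (by rw [Nat.even_iff]; omega) (Ne.symm hm), mul_zero,
        sub_zero]
  · exact inner_skewVec_of_even_of_ne he (Nat.not_odd_iff_even.mp hn) hmn.symm

theorem inner_skewDual_skewVec_self_ne_zero (he : Orthonormal ℝ e) (n : ℕ) :
    ⟪skewDual e n, skewVec e n⟫ ≠ 0 := by
  unfold skewDual
  split_ifs with hn
  · rw [skewVec_of_odd hn, inner_sub_left, real_inner_smul_left, he.2 (by omega : n + 1 ≠ n),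
      real_inner_self_eq_norm_sq, he.1]
    norm_num
  · rcases eq_or_ne n 0 with rfl | hn0
    · exact ne_of_eq_of_ne (inner_pred_skewVec_of_even he Even.zero) one_ne_zero
    · rw [inner_skewVec_self_of_even he (Nat.not_odd_iff_even.mp hn) hn0]
      positivity

theorem skewSpace_le_span_image_Icc (n : ℕ) :
    skewSpace e n ≤ span ℝ (e '' Icc (n - 1) n) := by
  rw [skewSpace, span_le, singleton_subset_iff]
  have hmem : ∀ k ∈ Icc (n - 1) n, e k ∈ span ℝ (e '' Icc (n - 1) n) := fun k hk =>
    subset_span (mem_image_of_mem e hk)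
  unfold skewVec
  split_ifs
  · exact hmem n ⟨Nat.sub_le n 1, le_rfl⟩
  · exact add_mem (hmem _ ⟨le_rfl, Nat.sub_le n 1⟩)
      (smul_mem _ _ (hmem n ⟨Nat.sub_le n 1, le_rfl⟩))

theorem biSup_skewSpace_le_span_image {S T : Set ℕ} (h : ∀ i ∈ S, Icc (i - 1) i ⊆ T) :
    ⨆ i ∈ S, skewSpace e i ≤ span ℝ (e '' T) :=
  iSup₂_le fun i hi => (skewSpace_le_span_image_Icc i).trans (span_mono (image_mono (h i hi)))

theorem skewVec_mem_iSup_skewSpace (n : ℕ) : skewVec e n ∈ ⨆ m, skewSpace e m :=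
  le_iSup (skewSpace e) n (mem_span_singleton_self _)

theorem mem_iSup_skewSpace (k : ℕ) : e k ∈ ⨆ n, skewSpace e n := by
  rcases Nat.even_or_odd k with hk | hk
  · rcases eq_or_ne k 0 with rfl | hk0
    · simpa [skewVec] using skewVec_mem_iSup_skewSpace (e := e) 0
    · have hpred : Odd (k - 1) := by rw [Nat.odd_iff]; rw [Nat.even_iff] at hk; omega
      rw [← add_sub_cancel_left ((k : ℝ) • e (k - 1)) (e k), ← natCast_smul_skewVec hk hk0,
        ← skewVec_of_odd (e := e) hpred]
      exact sub_mem (smul_mem _ _ (skewVec_mem_iSup_skewSpace k))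
        (smul_mem _ _ (skewVec_mem_iSup_skewSpace (k - 1)))
  · simpa [skewVec_of_odd hk] using skewVec_mem_iSup_skewSpace (e := e) k

theorem topologicalClosure_iSup_skewSpace
    (htot : (span ℝ (range e)).topologicalClosure = ⊤) :
    (⨆ n, skewSpace e n).topologicalClosure = ⊤ :=
  top_unique <| htot ▸
    topologicalClosure_mono (span_le.mpr (range_subset_iff.mpr mem_iSup_skewSpace))

theorem skewSpace_inf_topologicalClosure_eq_bot (he : Orthonormal ℝ e) (n : ℕ) :
    skewSpace e n ⊓ (⨆ m ∈ {m | m ≠ n}, skewSpace e m).topologicalClosure = ⊥ :=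
  inf_topologicalClosure_biSup_ne_eq_bot (innerSL ℝ (skewDual e n))
    (fun _ hm => span_le.mpr (singleton_subset_iff.mpr (inner_skewDual_skewVec_of_ne he hm)))
    (disjoint_span_singleton.mpr fun h =>
      absurd h (inner_skewDual_skewVec_self_ne_zero he n)).symm

theorem isDDD_skewSpace (he : Orthonormal ℝ e)
    (htot : (span ℝ (range e)).topologicalClosure = ⊤) : IsDDD (skewSpace e) :=
  ⟨fun _ => FiniteDimensional.span_of_finite ℝ (finite_singleton _),
    topologicalClosure_iSup_skewSpace htot, skewSpace_inf_topologicalClosure_eq_bot he⟩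

theorem isFDDof_skewSpace_blocks [CompleteSpace H] (he : Orthonormal ℝ e) {n m : ℕ → ℕ}
    (hnm : ∀ i, n i ≤ m i) (hskip : ∀ i, m i + 1 < n (i + 1)) :
    IsFDDof fun i => ⨆ j ∈ Icc (n i) (m i), skewSpace e j := by
  have hsupp : ∀ i,
      ⨆ j ∈ Icc (n i) (m i), skewSpace e j ≤ span ℝ (e '' Icc (n i - 1) (m i)) :=
    fun i => biSup_skewSpace_le_span_image fun j hj t ht => by
      simp only [mem_Icc] at hj ht ⊢; omega
  have : ∀ i, FiniteDimensional ℝ ↥(⨆ j ∈ Icc (n i) (m i), skewSpace e j) := fun i =>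
    have := FiniteDimensional.span_of_finite ℝ ((finite_Icc (n i - 1) (m i)).image e)
    finiteDimensional_of_le (hsupp i)
  refine isFDDof_of_pairwise_isOrtho fun i j hij =>
    (he.isOrtho_span_image ?_).mono (hsupp i) (hsupp j)
  rw [Set.disjoint_left]
  intro t hti htj
  simp only [mem_Icc] at hti htj
  rcases hij.lt_or_gt with h | h
  · have := add_one_lt_of_skipped hnm hskip h; omega
  · have := add_one_lt_of_skipped hnm hskip h; have := hnm j; omega

theorem isSBD_skewSpace [CompleteSpace H] (he : Orthonormal ℝ e)
    (htot : (span ℝ (range e)).topologicalClosure = ⊤) : IsSBD (skewSpace e) :=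
  ⟨isDDD_skewSpace he htot, fun _ _ => isFDDof_skewSpace_blocks he⟩

theorem norm_le_norm_add_of_skewSpace (he : Orthonormal ℝ e) {k : ℕ} {a b : H}
    (ha : a ∈ ⨆ i ∈ Iio k, skewSpace e i)
    (hb : b ∈ (⨆ i ∈ Ici (k + 1), skewSpace e i).topologicalClosure) :
    ‖a‖ ≤ ‖a + b‖ := by
  have hhead : ⨆ i ∈ Iio k, skewSpace e i ≤ span ℝ (e '' Iio k) :=
    biSup_skewSpace_le_span_image fun i hi t ht => by
      simp only [mem_Iio, mem_Icc] at hi ht ⊢; omega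
  have htail :
      (⨆ i ∈ Ici (k + 1), skewSpace e i).topologicalClosure ≤ (span ℝ (e '' Iio k))ᗮ := by
    refine topologicalClosure_minimal _ (le_trans ?_ (he.isOrtho_span_image
      (Set.Iio_disjoint_Ici (le_refl k))).ge) (span ℝ (e '' Iio k)).isClosed_orthogonal
    exact biSup_skewSpace_le_span_image fun i hi t ht => by
      simp only [mem_Ici, mem_Icc] at hi ht ⊢; omega
  exact norm_le_norm_add_of_inner_eq_zero ((mem_orthogonal _ _).mp (htail hb) a (hhead ha))

theorem natCast_le_norm_of_skewSpace_projection (he : Orthonormal ℝ e) {n : ℕ} (hn : Even n)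
    (hn0 : n ≠ 0) {p : H →L[ℝ] H}
    (hker : LinearMap.ker (p : H →ₗ[ℝ] H) =
      (⨆ m ∈ {m | m ≠ n}, skewSpace e m).topologicalClosure)
    (hfix : ∀ x ∈ skewSpace e n, p x = x) : (n : ℝ) ≤ ‖p‖ := by
  have hpred : p (e (n - 1)) = 0 := by
    have hodd : Odd (n - 1) := by rw [Nat.odd_iff]; rw [Nat.even_iff] at hn; omega
    have hmem : e (n - 1) ∈ ⨆ m ∈ {m | m ≠ n}, skewSpace e m :=
      le_iSup₂ (f := fun m (_ : m ∈ {m | m ≠ n}) => skewSpace e m) (n - 1)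
        (show n - 1 ≠ n by omega) (skewVec_of_odd (e := e) hodd ▸ mem_span_singleton_self _)
    exact LinearMap.mem_ker.mp (hker ▸ le_topologicalClosure _ hmem)
  have hpe : p (e n) = (n : ℝ) • skewVec e n := by
    have := congrArg p (natCast_smul_skewVec (e := e) hn hn0)
    rwa [map_smul, hfix _ (mem_span_singleton_self _), map_add, map_smul, hpred, smul_zero,
      zero_add, eq_comm] at this
  calc (n : ℝ) = n * 1 := (mul_one _).symm
    _ ≤ n * ‖skewVec e n‖ := by gcongr; exact one_le_norm_skewVec_of_even he hn
    _ = ‖p (e n)‖ := by rw [hpe, norm_smul, Real.norm_natCast]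
    _ ≤ ‖p‖ * ‖e n‖ := p.le_opNorm _
    _ = ‖p‖ := by rw [he.1, mul_one]

theorem not_isFDDof_skewSpace [CompleteSpace H] (he : Orthonormal ℝ e)
    (htot : (span ℝ (range e)).topologicalClosure = ⊤) : ¬ IsFDDof (skewSpace e) := by
  intro hF
  obtain ⟨x, hx⟩ : Summable fun j : ℕ => (j : ℝ)⁻¹ • e j := by
    simpa using (he.orthogonalFamily.summable_iff_norm_sq_summable _).mpr (by simp)
  have hcoord : ∀ k, ⟪e k, x⟫ = (k : ℝ)⁻¹ := fun k => by
    have hk := hasSum_single (f := fun j : ℕ => ⟪e k, (j : ℝ)⁻¹ • e j⟫) k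
      fun j hj => by rw [real_inner_smul_right, he.2 (Ne.symm hj), mul_zero]
    refine (((innerSL ℝ (e k)).hasSum hx).unique hk).trans ?_
    simp only [real_inner_smul_right, real_inner_self_eq_norm_sq, he.1, one_pow, mul_one]
  obtain ⟨w, ⟨hw, hlim⟩, -⟩ :=
    hF x (by rw [topologicalClosure_iSup_skewSpace htot]; trivial)
  choose d hd using fun i => mem_span_singleton.mp (hw i)
  have hwk : ∀ k, Even k → k ≠ 0 → w k = skewVec e k := by
    intro k hk hk0
    have hk' : ⟪e k, w k⟫ = ⟪e k, x⟫ :=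
      apply_eq_of_tendsto_sum (innerSL ℝ (e k)) hlim fun i hi => by
        simp [← hd i, inner_skewVec_of_even_of_ne he hk (Ne.symm hi)]
    rw [← hd k, real_inner_smul_right, inner_skewVec_self_of_even he hk hk0, hcoord] at hk'
    have hd1 : d k = 1 := by simpa [hk0] using hk'
    rw [← hd k, hd1, one_smul]
  have hw0 := tendsto_zero_iff_norm_tendsto_zero.mp (tendsto_zero_of_tendsto_sum hlim)
  obtain ⟨N, hN⟩ := eventually_atTop.mp (hw0.eventually_lt_const one_pos)
  have heven : Even (2 * N + 2) := ⟨N + 1, by ring⟩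
  have hsmall := hN (2 * N + 2) (by omega)
  rw [hwk _ heven (by omega)] at hsmall
  exact (one_le_norm_skewVec_of_even he heven).not_gt hsmall

end SkewExample

/-- In a Hilbert space with orthonormal basis, the sequence
`X n = span {e n}` for `n` odd and `X n = span {e (n-1) + e n / n}` for `n` even
is an SBD with constant 1 (every skipped projection has norm 1), while the
projections `p n` onto `X n` along the span of the remaining spaces eventually
satisfy `‖p n‖ ≥ n - 1` for even `n`; hence `(X n)` is not an FDD. -/
theorem stmt2 {H : Type*} [NormedAddCommGroup H] [InnerProductSpace ℝ H] [CompleteSpace H]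
    (e : ℕ → H) (he : Orthonormal ℝ e)
    (htot : (Submodule.span ℝ (Set.range e)).topologicalClosure = ⊤)
    (X : ℕ → Submodule ℝ H)
    (hXdef : ∀ n, X n = if Odd n then Submodule.span ℝ {e n}
      else Submodule.span ℝ {e (n - 1) + ((n : ℝ))⁻¹ • e n}) :
    IsSBD X ∧
    (∀ k, ∀ a ∈ (⨆ i ∈ Set.Iio k, X i),
      ∀ b ∈ (⨆ i ∈ Set.Ici (k + 1), X i).topologicalClosure, ‖a‖ ≤ ‖a + b‖) ∧
    (∀ p : ℕ → H →L[ℝ] H,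
      (∀ n, LinearMap.range ((p n : H →ₗ[ℝ] H)) = X n ∧
        LinearMap.ker ((p n : H →ₗ[ℝ] H)) =
          (⨆ m ∈ {m | m ≠ n}, X m).topologicalClosure ∧
        ∀ x ∈ X n, p n x = x) →
      ∃ N : ℕ, ∀ n : ℕ, N ≤ n → Even n → (n : ℝ) - 1 ≤ ‖p n‖) ∧
    ¬ IsFDDof X := by
  obtain rfl : X = skewSpace e := funext fun n => by
    rw [hXdef, skewSpace, skewVec]
    split_ifs <;> rfl
  refine ⟨isSBD_skewSpace he htot, fun k a ha b hb => norm_le_norm_add_of_skewSpace he ha hb,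
    fun p hp => ⟨1, fun n hn heven => ?_⟩, not_isFDDof_skewSpace he htot⟩
  have := natCast_le_norm_of_skewSpace_projection he heven (by omega) (hp n).2.1 (hp n).2.2
  linarith
end

section
/- Let (e_i) be a basis of a Banach space X and π a permutation of the natural numbers. The sequence of one-dimensional subspaces X_n = span{e_{π(n)}} is always a DDD (total and minimal), and it is a skipped-blocking decomposition if and only if (e_{π(n)}) is itself a (Schauder) basis of X. -/
open Submodule Set Filter Topology

variable {E : Type*} [NormedAddCommGroup E] [NormedSpace ℝ E]

/-!
In a Banach space, the open mapping theorem applied to the space of convergent sequences of partial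
sums bounds the partial sums of any FDD of closed subspaces by the sum; for a basis this makes the
coefficient functionals continuous. They give totality and minimality of `(span {e (π n)})`, and
any blocking of a basis is an FDD. Conversely, if the projections onto
`span {e (π j) : j < N}` were unbounded, a gliding hump would produce vectors carried by two
consecutive blocks of one fixed skipped blocking whose first block is arbitrarily large compared to
the vector, against the bound for that FDD; bounded projections converge on the dense span, hence
everywhere.
-/

lemma tendsto_sum_range_single_smul (v : ℕ → E) (j : ℕ) :
    Tendsto (fun N => ∑ i ∈ Finset.range N, (Pi.single j (1 : ℝ) : ℕ → ℝ) i • v i) atTop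
      (𝓝 (v j)) := by
  refine tendsto_const_nhds.congr' ?_
  filter_upwards [eventually_gt_atTop j] with N hN
  simp [Pi.single_apply, hN]

lemma isClosed_iSup_span_Icc (v : ℕ → E) (a c : ℕ) :
    IsClosed ((⨆ j ∈ Set.Icc a c, Submodule.span ℝ {v j} : Submodule ℝ E) : Set E) := by
  rw [iSup_subtype']
  exact Submodule.closed_of_finiteDimensional _

lemma exists_ge_lt_of_not_bddAbove {f : ℕ → ℝ} (hf : ¬BddAbove (Set.range f)) (R : ℝ) (b₀ : ℕ) :
    ∃ N, b₀ ≤ N ∧ R < f N := by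
  by_contra! h
  refine hf ((((Set.finite_Iio b₀).image f).bddAbove.union (bddAbove_Iic (a := R))).mono ?_)
  rintro _ ⟨N, rfl⟩
  rcases lt_or_ge N b₀ with hN | hN
  · exact Or.inl ⟨N, hN, rfl⟩
  · exact Or.inr (h N hN)

section Blocks

variable {n m : ℕ → ℕ} (hnm : ∀ i, n i ≤ m i) (hmn : ∀ i, m i < n (i + 1))
include hnm hmn

lemma strictMono_block_start : StrictMono n :=
  strictMono_nat_of_lt_succ fun i => (hnm i).trans_lt (hmn i)

lemma block_end_lt_block_start {i i' : ℕ} (h : i < i') : m i < n i' :=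
  (hmn i).trans_le <| (strictMono_block_start hnm hmn).monotone h

lemma eq_of_mem_block {i i' j : ℕ} (h : j ∈ Set.Icc (n i) (m i)) (h' : j ∈ Set.Icc (n i') (m i')) :
    i = i' := by
  by_contra hne
  rcases Nat.lt_or_gt_of_ne hne with hlt | hlt
  · have := block_end_lt_block_start hnm hmn hlt; grind
  · have := block_end_lt_block_start hnm hmn hlt; grind

end Blocks

namespace IsFDDof

/-- Convergent sequences in `E`, seen as continuous maps on `ℕ ∪ {∞}`, which start at `0` and
whose `N`-th increment lies in `W N`. -/
def partialSumSpace (W : ℕ → Submodule ℝ E) : Submodule ℝ C(OnePoint ℕ, E) :=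
  LinearMap.ker
      (ContinuousMap.evalCLM (M := E) ℝ ((0 : ℕ) : OnePoint ℕ) : C(OnePoint ℕ, E) →ₗ[ℝ] E) ⊓
    ⨅ N : ℕ, (W N).comap
      ((ContinuousMap.evalCLM (M := E) ℝ ((N + 1 : ℕ) : OnePoint ℕ) -
        ContinuousMap.evalCLM ℝ (N : OnePoint ℕ) : C(OnePoint ℕ, E) →L[ℝ] E) :
        C(OnePoint ℕ, E) →ₗ[ℝ] E)

variable {W : ℕ → Submodule ℝ E}

lemma mem_partialSumSpace {S : C(OnePoint ℕ, E)} :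
    S ∈ partialSumSpace W ↔ S (0 : ℕ) = 0 ∧ ∀ N : ℕ, S (N + 1 : ℕ) - S N ∈ W N := by
  simp [partialSumSpace]

lemma isClosed_partialSumSpace (hW : ∀ N, IsClosed (W N : Set E)) :
    IsClosed (partialSumSpace W : Set C(OnePoint ℕ, E)) := by
  simp only [partialSumSpace, Submodule.coe_inf, Submodule.coe_iInf, Submodule.comap_coe]
  exact (ContinuousLinearMap.isClosed_ker _).inter
    (isClosed_iInter fun N => (hW N).preimage (ContinuousLinearMap.continuous _))

lemma sum_range_sub_of_mem {S : C(OnePoint ℕ, E)} (hS : S ∈ partialSumSpace W) (N : ℕ) :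
    ∑ i ∈ Finset.range N, (S (i + 1 : ℕ) - S i) = S N := by
  rw [Finset.sum_range_sub (fun i : ℕ => S i), (mem_partialSumSpace.mp hS).1, sub_zero]

lemma tendsto_sum_range_sub_of_mem (S : C(OnePoint ℕ, E)) (hS : S ∈ partialSumSpace W) :
    Tendsto (fun N => ∑ i ∈ Finset.range N, (S (i + 1 : ℕ) - S i)) atTop
      (𝓝 (S OnePoint.infty)) := by
  simpa only [sum_range_sub_of_mem hS] using (OnePoint.continuous_iff_from_nat S).mp S.continuous

lemma mem_topologicalClosure_of_tendsto {w : ℕ → E} {x : E} (hw : ∀ i, w i ∈ W i)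
    (hx : Tendsto (fun N => ∑ i ∈ Finset.range N, w i) atTop (𝓝 x)) :
    x ∈ (⨆ i, W i).topologicalClosure :=
  mem_closure_of_tendsto hx (Eventually.of_forall fun _ =>
    Submodule.sum_mem _ fun i _ => Submodule.mem_iSup_of_mem i (hw i))

/-- Evaluation at `∞` is a continuous bijection from `partialSumSpace W` onto the closed span,
so the open mapping theorem bounds the partial sums by the sum. -/
theorem exists_norm_sum_range_le [CompleteSpace E] (hW : ∀ N, IsClosed (W N : Set E))
    (h : IsFDDof W) :
    ∃ C, ∀ (w : ℕ → E) (x : E), (∀ i, w i ∈ W i) →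
      Tendsto (fun N => ∑ i ∈ Finset.range N, w i) atTop (𝓝 x) →
      ∀ N, ‖∑ i ∈ Finset.range N, w i‖ ≤ C * ‖x‖ := by
  set G := partialSumSpace W
  set Y := (⨆ i, W i).topologicalClosure
  have : CompleteSpace G := (isClosed_partialSumSpace hW).completeSpace_coe
  have hlim : ∀ S : G, (S : C(OnePoint ℕ, E)) OnePoint.infty ∈ Y := fun S =>
    mem_topologicalClosure_of_tendsto (fun i => (mem_partialSumSpace.mp S.2).2 i)
      (tendsto_sum_range_sub_of_mem _ S.2)
  let T : G →L[ℝ] Y := ((ContinuousMap.evalCLM ℝ OnePoint.infty).comp G.subtypeL).codRestrict Y hlim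
  have hT : Function.Surjective T := by
    rintro ⟨y, hy⟩
    obtain ⟨w, ⟨hw, hwy⟩, -⟩ := h y hy
    refine ⟨⟨OnePoint.continuousMapMkNat _ y hwy, mem_partialSumSpace.mpr ⟨?_, fun N => ?_⟩⟩, rfl⟩
    · exact Finset.sum_range_zero w
    · change ∑ i ∈ Finset.range (N + 1), w i - ∑ i ∈ Finset.range N, w i ∈ W N
      simpa [Finset.sum_range_succ] using hw N
  obtain ⟨C, -, hC⟩ := T.exists_preimage_norm_le hT
  refine ⟨C, fun w x hw hx N => ?_⟩
  obtain ⟨S, hSx, hSC⟩ := hC ⟨x, mem_topologicalClosure_of_tendsto hw hx⟩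
  have hSw : (fun i => (S : C(OnePoint ℕ, E)) (i + 1 : ℕ) - (S : C(OnePoint ℕ, E)) i) = w := by
    refine (h x (mem_topologicalClosure_of_tendsto hw hx)).unique ⟨fun i =>
      (mem_partialSumSpace.mp S.2).2 i, ?_⟩ ⟨hw, hx⟩
    have : (S : C(OnePoint ℕ, E)) OnePoint.infty = x := congrArg Subtype.val hSx
    simpa [this] using tendsto_sum_range_sub_of_mem _ S.2
  calc ‖∑ i ∈ Finset.range N, w i‖ = ‖(S : C(OnePoint ℕ, E)) N‖ := by
        rw [← hSw, sum_range_sub_of_mem S.2]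
    _ ≤ ‖S‖ := ContinuousMap.norm_coe_le_norm _ _
    _ ≤ C * ‖x‖ := hSC

theorem exists_norm_le_norm_add [CompleteSpace E] (hW : ∀ N, IsClosed (W N : Set E))
    (h : IsFDDof W) :
    ∃ C, ∀ k u v, u ∈ W k → v ∈ W (k + 1) → ‖u‖ ≤ C * ‖u + v‖ := by
  obtain ⟨C, hC⟩ := h.exists_norm_sum_range_le hW
  refine ⟨C, fun k u v hu hv => ?_⟩
  set w : ℕ → E := Pi.single k u + Pi.single (k + 1) v
  have hsum : ∀ N, ∑ i ∈ Finset.range N, w i =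
      (if k < N then u else 0) + (if k + 1 < N then v else 0) := by
    intro N
    simp [w, Finset.sum_add_distrib, Finset.sum_pi_single']
  have hw : ∀ i, w i ∈ W i := by
    intro i
    rcases eq_or_ne i k with rfl | hik
    · simpa [w] using hu
    rcases eq_or_ne i (k + 1) with rfl | hik'
    · simpa [w] using hv
    simp [w, hik, hik']
  have hlim : Tendsto (fun N => ∑ i ∈ Finset.range N, w i) atTop (𝓝 (u + v)) := by
    refine tendsto_const_nhds.congr' ?_
    filter_upwards [eventually_gt_atTop (k + 1)] with N hN
    rw [hsum, if_pos (by omega), if_pos hN]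
  simpa [hsum] using hC w (u + v) hw hlim (k + 1)

end IsFDDof

theorem isSchauderBasis_of_tendsto {e : ℕ → E} (f : ℕ → StrongDual ℝ E)
    (hf : ∀ i j, f i (e j) = (Pi.single j (1 : ℝ) : ℕ → ℝ) i)
    (h : ∀ x, Tendsto (fun N => ∑ i ∈ Finset.range N, f i x • e i) atTop (𝓝 x)) :
    IsSchauderBasis e := by
  refine fun x => ⟨fun i => f i x, h x, fun a ha => funext fun l => ?_⟩
  have hfl : Tendsto (fun N => f l (∑ i ∈ Finset.range N, a i • e i)) atTop (𝓝 (f l x)) :=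
    ((f l).continuous.tendsto x).comp ha
  refine tendsto_nhds_unique (tendsto_const_nhds.congr' ?_) hfl
  filter_upwards [eventually_gt_atTop l] with N hN
  simp [hf, Pi.single_apply, hN]

namespace IsSchauderBasis

variable {e : ℕ → E} (he : IsSchauderBasis e)
include he

noncomputable def coeff (x : E) : ℕ → ℝ := (he x).exists.choose

lemma tendsto_coeff (x : E) :
    Tendsto (fun N => ∑ i ∈ Finset.range N, he.coeff x i • e i) atTop (𝓝 x) :=
  (he x).exists.choose_spec

lemma eq_coeff {x : E} {a : ℕ → ℝ}
    (ha : Tendsto (fun N => ∑ i ∈ Finset.range N, a i • e i) atTop (𝓝 x)) : a = he.coeff x :=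
  (he x).unique ha (he.tendsto_coeff x)

lemma coeff_add (x y : E) : he.coeff (x + y) = he.coeff x + he.coeff y :=
  (he.eq_coeff (by simpa [add_smul, Finset.sum_add_distrib] using
    (he.tendsto_coeff x).add (he.tendsto_coeff y))).symm

lemma coeff_smul (c : ℝ) (x : E) : he.coeff (c • x) = c • he.coeff x :=
  (he.eq_coeff (by simpa [mul_smul, ← Finset.smul_sum] using
    (he.tendsto_coeff x).const_smul c)).symm

lemma coeff_apply (j : ℕ) : he.coeff (e j) = Pi.single j 1 :=
  (he.eq_coeff (tendsto_sum_range_single_smul e j)).symm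

lemma ne_zero (j : ℕ) : e j ≠ 0 := by
  intro hj
  have h0 : Tendsto (fun N => ∑ i ∈ Finset.range N, (0 : ℕ → ℝ) i • e i) atTop (𝓝 (e j)) := by
    simp [hj]
  have := congrFun ((he.eq_coeff h0).trans (he.coeff_apply j)) j
  simp at this

lemma isFDDof_span : IsFDDof fun i => Submodule.span ℝ {e i} := by
  refine fun x _ => ⟨fun i => he.coeff x i • e i,
    ⟨fun i => Submodule.smul_mem _ _ (Submodule.mem_span_singleton_self _), he.tendsto_coeff x⟩,
    fun w ⟨hw, hwx⟩ => ?_⟩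
  choose a ha using fun i => Submodule.mem_span_singleton.mp (hw i)
  have hw' : w = fun i => a i • e i := funext fun i => (ha i).symm
  subst hw'
  rw [he.eq_coeff hwx]

theorem exists_norm_coeff_smul_le [CompleteSpace E] :
    ∃ C, ∀ x k, ‖he.coeff x k • e k‖ ≤ C * ‖x‖ := by
  obtain ⟨C, hC⟩ := he.isFDDof_span.exists_norm_sum_range_le
    (fun _ => Submodule.closed_of_finiteDimensional _)
  refine ⟨2 * C, fun x k => ?_⟩
  have hS := hC _ x (fun i => Submodule.smul_mem _ _ (Submodule.mem_span_singleton_self _))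
    (he.tendsto_coeff x)
  calc ‖he.coeff x k • e k‖
      = ‖∑ i ∈ Finset.range (k + 1), he.coeff x i • e i -
          ∑ i ∈ Finset.range k, he.coeff x i • e i‖ := by
        rw [Finset.sum_range_succ, add_sub_cancel_left]
    _ ≤ C * ‖x‖ + C * ‖x‖ := (norm_sub_le _ _).trans (add_le_add (hS _) (hS _))
    _ = 2 * C * ‖x‖ := by ring

theorem exists_schauderBasis [CompleteSpace E] : ∃ b : SchauderBasis ℝ E, ⇑b = e := by
  obtain ⟨C, hC⟩ := he.exists_norm_coeff_smul_le
  let coord (k : ℕ) : StrongDual ℝ E := LinearMap.mkContinuous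
    { toFun := fun x => he.coeff x k
      map_add' := fun x y => by simp [he.coeff_add]
      map_smul' := fun c x => by simp [he.coeff_smul] }
    (C / ‖e k‖) fun x => by
      rw [div_mul_eq_mul_div, le_div_iff₀ (norm_pos_iff.mpr (he.ne_zero k)), ← norm_smul]
      exact hC x k
  refine ⟨⟨e, coord, fun i j => by simp [coord, he.coeff_apply, Pi.single_apply], fun x => ?_⟩, rfl⟩
  rw [HasSum, SummationFilter.conditional_filter_eq_map_range, tendsto_map'_iff]
  exact he.tendsto_coeff x

end IsSchauderBasis

namespace GeneralSchauderBasis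

variable {β 𝕜 X : Type*} [NontriviallyNormedField 𝕜] [NormedAddCommGroup X] [NormedSpace 𝕜 X]
  {L : SummationFilter β} (b : GeneralSchauderBasis β 𝕜 X L)

lemma iSup_span_le_ker_coord {ι : Type*} (σ : ι → β) (s : Set ι) {l : β}
    (hl : ∀ i ∈ s, σ i ≠ l) :
    ⨆ i ∈ s, Submodule.span 𝕜 {b (σ i)} ≤ LinearMap.ker (b.coord l : X →ₗ[𝕜] 𝕜) :=
  iSup₂_le fun i hi => (Submodule.span_singleton_le_iff_mem _ _).mpr <| by
    simp [b.ortho, (hl i hi).symm]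

lemma proj_eq_of_subset {A B : Finset β} (hAB : A ⊆ B) {x : X}
    (hx : ∀ i ∈ B, i ∉ A → b.coord i x = 0) : b.proj A x = b.proj B x := by
  simp only [proj_apply]
  exact Finset.sum_subset hAB fun i hiB hiA => by simp [hx i hiB hiA]

lemma proj_mem_iSup_span {A : Finset β} {s : Set β} (hA : ↑A ⊆ s) (x : X) :
    b.proj A x ∈ ⨆ i ∈ s, Submodule.span 𝕜 {b i} := by
  rw [proj_apply]
  exact Submodule.sum_mem _ fun i hi => Submodule.smul_mem _ _ <|
    Submodule.mem_iSup_of_mem i <| Submodule.mem_iSup_of_mem (hA hi) <|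
      Submodule.mem_span_singleton_self _

lemma proj_eq_self_of_mem {A : Finset β} {x : X}
    (hx : x ∈ ⨆ i ∈ (A : Set β), Submodule.span 𝕜 {b i}) : b.proj A x = x := by
  classical
  have hle : ⨆ i ∈ (A : Set β), Submodule.span 𝕜 {b i} ≤ LinearMap.range (b.proj A : X →ₗ[𝕜] X) :=
    iSup₂_le fun i hi => (Submodule.span_singleton_le_iff_mem _ _).mpr
      ⟨b i, by simp [b.proj_apply_basis_mem, Finset.mem_coe.mp hi]⟩
  obtain ⟨z, rfl⟩ := hle hx
  rw [ContinuousLinearMap.coe_coe, b.proj_comp, Finset.inter_self]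

end GeneralSchauderBasis

namespace SchauderBasis

variable (b : SchauderBasis ℝ E)

theorem isDDD_perm (π : Equiv.Perm ℕ) : IsDDD fun n => Submodule.span ℝ {b (π n)} := by
  refine ⟨fun n => inferInstance, ?_, fun n => ?_⟩
  · refine eq_top_iff.mpr fun x _ => mem_closure_of_tendsto (b.tendsto_proj x)
      (Eventually.of_forall fun N => ?_)
    rw [SetLike.mem_coe, SchauderBasis.proj_apply]
    refine Submodule.sum_mem _ fun i _ => Submodule.smul_mem _ _ <|
      Submodule.mem_iSup_of_mem (π.symm i) ?_
    simp
  · refine eq_bot_iff.mpr ?_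
    rintro x ⟨hx, hx'⟩
    obtain ⟨c, rfl⟩ := Submodule.mem_span_singleton.mp hx
    have hker := Submodule.topologicalClosure_minimal _
      (b.iSup_span_le_ker_coord π {m | m ≠ n} fun m hm => π.injective.ne hm)
      (ContinuousLinearMap.isClosed_ker (b.coord (π n))) hx'
    simp_all [b.ortho]

lemma sum_range_proj_blocks {n m : ℕ → ℕ} (hnm : ∀ i, n i ≤ m i) (hmn : ∀ i, m i < n (i + 1))
    {x : E} (hx : ∀ l, (∀ i, l ∉ Set.Icc (n i) (m i)) → b.coord l x = 0) (N : ℕ) :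
    ∑ i ∈ Finset.range N, GeneralSchauderBasis.proj b (Finset.Icc (n i) (m i)) x =
      b.proj (n N) x := by
  have hdisj : (Set.univ : Set ℕ).PairwiseDisjoint fun i => Finset.Icc (n i) (m i) :=
    fun i _ i' _ hne => Finset.disjoint_left.mpr fun j hj hj' =>
      hne (eq_of_mem_block hnm hmn (by simpa using hj) (by simpa using hj'))
  simp only [GeneralSchauderBasis.proj_apply, SchauderBasis.proj_apply]
  rw [← Finset.sum_biUnion (hdisj.subset (Set.subset_univ _)),
    ← GeneralSchauderBasis.proj_apply, ← GeneralSchauderBasis.proj_apply]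
  refine b.proj_eq_of_subset (fun j hj => ?_) fun j hj hj' => hx j fun i hi => ?_
  · obtain ⟨i, hi, hj⟩ := Finset.mem_biUnion.mp hj
    have := block_end_lt_block_start hnm hmn (Finset.mem_range.mp hi)
    simp only [Finset.mem_Icc] at hj
    exact Finset.mem_range.mpr (by omega)
  · rcases lt_or_ge i N with hiN | hiN
    · exact hj' (Finset.mem_biUnion.mpr ⟨i, Finset.mem_range.mpr hiN, by simpa using hi⟩)
    · have := (strictMono_block_start hnm hmn).monotone hiN
      simp only [Finset.mem_range] at hj
      exact absurd hi.1 (by omega)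

theorem isFDDof_blocks {n m : ℕ → ℕ} (hnm : ∀ i, n i ≤ m i) (hmn : ∀ i, m i < n (i + 1)) :
    IsFDDof fun i => ⨆ j ∈ Set.Icc (n i) (m i), Submodule.span ℝ {b j} := by
  set I : ℕ → Finset ℕ := fun i => Finset.Icc (n i) (m i)
  have hker : ∀ {i l}, l ∉ Set.Icc (n i) (m i) →
      ⨆ j ∈ Set.Icc (n i) (m i), Submodule.span ℝ {b j} ≤ LinearMap.ker (b.coord l : E →ₗ[ℝ] ℝ) :=
    fun hl => b.iSup_span_le_ker_coord id _ fun j hj h => hl (h ▸ hj)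
  intro x hx
  have hgap : ∀ l, (∀ i, l ∉ Set.Icc (n i) (m i)) → b.coord l x = 0 := fun l hl =>
    Submodule.topologicalClosure_minimal _ (iSup_le fun i => hker (hl i))
      (ContinuousLinearMap.isClosed_ker _) hx
  refine ⟨fun i => GeneralSchauderBasis.proj b (I i) x,
    ⟨fun i => b.proj_mem_iSup_span (by simp [I]) x, ?_⟩, fun w ⟨hw, hwx⟩ => funext fun i => ?_⟩
  · simp only [I, b.sum_range_proj_blocks hnm hmn hgap]
    exact (b.tendsto_proj x).comp (strictMono_block_start hnm hmn).tendsto_atTop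
  · have hcoord : ∀ l ∈ I i, b.coord l (w i) = b.coord l x := by
      intro l hl
      have hl' : l ∈ Set.Icc (n i) (m i) := by simpa [I] using hl
      refine tendsto_nhds_unique (tendsto_const_nhds.congr' ?_)
        (((b.coord l).continuous.tendsto x).comp hwx)
      filter_upwards [eventually_gt_atTop i] with N hN
      rw [Function.comp_apply, map_sum, Finset.sum_eq_single_of_mem i (Finset.mem_range.mpr hN)]
      intro i' _ hi'
      exact hker (fun h => hi' (eq_of_mem_block hnm hmn h hl')) (hw i')
    have hwi : GeneralSchauderBasis.proj b (I i) (w i) = w i :=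
      b.proj_eq_self_of_mem (by simpa [I] using hw i)
    rw [← hwi, GeneralSchauderBasis.proj_apply, GeneralSchauderBasis.proj_apply]
    exact Finset.sum_congr rfl fun l hl => by rw [hcoord l hl]

section Perm

variable (π : Equiv.Perm ℕ)

noncomputable def permProj (S : Finset ℕ) : E →L[ℝ] E :=
  GeneralSchauderBasis.proj b (S.map π.toEmbedding)

lemma permProj_apply (S : Finset ℕ) (x : E) :
    b.permProj π S x = ∑ j ∈ S, b.coord (π j) x • b (π j) := by
  simp [permProj]

lemma permProj_comp (S T : Finset ℕ) (x : E) :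
    b.permProj π S (b.permProj π T x) = b.permProj π (S ∩ T) x := by
  simp only [permProj, GeneralSchauderBasis.proj_comp]
  congr 2; ext; simp

lemma permProj_inter_add_sdiff (S T : Finset ℕ) (x : E) :
    b.permProj π (S ∩ T) x + b.permProj π (S \ T) x = b.permProj π S x := by
  simp only [permProj_apply, Finset.sum_inter_add_sum_sdiff]

lemma permProj_map_symm (L : ℕ) :
    b.permProj π ((Finset.range L).map π.symm.toEmbedding) = b.proj L := by
  simp [permProj, SchauderBasis.proj, Finset.map_map]

lemma permProj_mem_iSup_span {S : Finset ℕ} {s : Set ℕ} (hS : ↑S ⊆ s) (x : E) :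
    b.permProj π S x ∈ ⨆ j ∈ s, Submodule.span ℝ {b (π j)} := by
  rw [permProj_apply]
  exact Submodule.sum_mem _ fun j hj => Submodule.smul_mem _ _ <|
    Submodule.mem_iSup_of_mem j <| Submodule.mem_iSup_of_mem (hS hj) <|
      Submodule.mem_span_singleton_self _

theorem isSchauderBasis_perm_of_bddAbove
    (hQ : BddAbove (Set.range fun N => ‖b.permProj π (Finset.range N)‖)) :
    IsSchauderBasis fun n => b (π n) := by
  refine isSchauderBasis_of_tendsto (fun i => b.coord (π i))
    (fun i j => by simp [b.ortho, Pi.single_apply, π.injective.eq_iff]) fun x => ?_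
  simp_rw [← permProj_apply]
  have hclosed : IsClosed {x | Tendsto (fun N => b.permProj π (Finset.range N) x) atTop (𝓝 x)} :=
    Equicontinuous.isClosed_setOfPred_tendsto (f := id)
      (((NormedSpace.equicontinuous_TFAE _).out 7 1).mp hQ) continuous_id
  refine hclosed.mem_of_tendsto (b.tendsto_proj x) (Eventually.of_forall fun L => ?_)
  obtain ⟨N₀, hN₀⟩ := ((Finset.range L).map π.symm.toEmbedding).exists_nat_subset_range
  refine tendsto_const_nhds.congr' ?_
  filter_upwards [eventually_ge_atTop N₀] with N hN
  rw [← permProj_map_symm, permProj_comp, Finset.inter_eq_right.mpr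
    (hN₀.trans (Finset.range_subset_range.mpr hN))]

lemma norm_permProj_insert_le {C : ℝ} (hC : ∀ n, ‖b.proj n‖ ≤ C) {S : Finset ℕ} {N : ℕ}
    (hN : N ∉ S) (x : E) : ‖b.permProj π (insert N S) x‖ ≤ (2 * C + ‖b.permProj π S‖) * ‖x‖ := by
  have hsplit : b.permProj π (insert N S) x =
      (b.proj (π N + 1) x - b.proj (π N) x) + b.permProj π S x := by
    simp [permProj_apply, Finset.sum_insert hN, Finset.sum_range_succ]
  rw [hsplit, two_mul, add_mul, add_mul]
  exact (norm_add_le _ _).trans (add_le_add ((norm_sub_le _ _).trans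
    (add_le_add ((b.proj _).le_of_opNorm_le (hC _) x) ((b.proj _).le_of_opNorm_le (hC _) x)))
    ((b.permProj π S).le_opNorm x))

lemma permProj_map_symm_sdiff (L : ℕ) (F : Finset ℕ) (x : E) :
    b.permProj π ((Finset.range L).map π.symm.toEmbedding \ F) x =
      b.proj L (x - b.permProj π F x) := by
  have h := b.permProj_inter_add_sdiff π ((Finset.range L).map π.symm.toEmbedding) F x
  rw [← b.permProj_comp, b.permProj_map_symm] at h
  rw [eq_sub_of_add_eq' h, map_sub]

/-- The hump is obtained from an almost norming vector `z` of `permProj π (range N)` by truncating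
its `b`-expansion far out and deleting the coordinates in `range b₀ ∪ {N}`. -/
lemma exists_hump [CompleteSpace E]
    (hQ : ¬BddAbove (Set.range fun N => ‖b.permProj π (Finset.range N)‖)) {r : ℝ} (hr : 0 ≤ r)
    (b₀ : ℕ) : ∃ N, b₀ ≤ N ∧ ∃ (S : Finset ℕ) (z : E), (∀ j ∈ S, b₀ ≤ j ∧ j ≠ N) ∧
      r * ‖b.permProj π S z‖ < ‖b.permProj π (Finset.range N) (b.permProj π S z)‖ := by
  obtain ⟨C, hC⟩ := b.exists_norm_proj_le
  have hC0 : 0 ≤ C := (norm_nonneg _).trans (hC 0)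
  set Q₀ := b.permProj π (Finset.range b₀)
  set D := C * (1 + ‖Q₀‖ + 2 * C)
  obtain ⟨N, hbN, hN⟩ := exists_ge_lt_of_not_bddAbove hQ (r * D + ‖Q₀‖) b₀
  obtain ⟨z, hz⟩ : ∃ z, (r * D + ‖Q₀‖) * ‖z‖ < ‖b.permProj π (Finset.range N) z‖ := by
    by_contra! h
    exact (lt_of_lt_of_le hN (ContinuousLinearMap.opNorm_le_bound _ (by positivity) h)).false
  obtain ⟨L, hL⟩ := ((Finset.range N).map π.toEmbedding).exists_nat_subset_range
  set F := insert N (Finset.range b₀)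
  set T := (Finset.range L).map π.symm.toEmbedding
  have hNT : Finset.range N ⊆ T := fun j hj => by
    simpa [T] using hL (Finset.mem_map_of_mem π.toEmbedding hj)
  refine ⟨N, hbN, T \ F, z, fun j hj => ?_, ?_⟩
  · simp only [F, Finset.mem_sdiff, Finset.mem_insert, Finset.mem_range] at hj
    omega
  have hF := b.norm_permProj_insert_le π hC (S := Finset.range b₀) (by simpa using hbN) z
  have hnorm : ‖b.permProj π (T \ F) z‖ ≤ D * ‖z‖ :=
    calc ‖b.permProj π (T \ F) z‖ ≤ C * ‖z - b.permProj π F z‖ := by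
          rw [permProj_map_symm_sdiff]; exact (b.proj L).le_of_opNorm_le (hC L) _
      _ ≤ C * (‖z‖ + (2 * C + ‖Q₀‖) * ‖z‖) := by gcongr; exact (norm_sub_le _ _).trans (by gcongr)
      _ = D * ‖z‖ := by ring
  have hQN : b.permProj π (Finset.range N) (b.permProj π (T \ F) z) =
      b.permProj π (Finset.range N) z - Q₀ z := by
    have hN₀ : Finset.range N ∩ F = Finset.range b₀ := by
      ext j; simp only [F, Finset.mem_inter, Finset.mem_insert, Finset.mem_range]; omega
    have hNF : Finset.range N ∩ (T \ F) = Finset.range N \ F := by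
      ext j; have := @hNT j; simp only [Finset.mem_inter, Finset.mem_sdiff]; tauto
    rw [permProj_comp, hNF, ← b.permProj_inter_add_sdiff π (Finset.range N) F, hN₀,
      add_sub_cancel_left]
  rw [hQN]
  calc r * ‖b.permProj π (T \ F) z‖ ≤ r * (D * ‖z‖) := by gcongr
    _ = (r * D + ‖Q₀‖) * ‖z‖ - ‖Q₀‖ * ‖z‖ := by ring
    _ < ‖b.permProj π (Finset.range N) z‖ - ‖Q₀ z‖ := by linarith [Q₀.le_opNorm z]
    _ ≤ ‖b.permProj π (Finset.range N) z - Q₀ z‖ := norm_sub_norm_le _ _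

/-- Gliding hump: the `k`-th hump lives in `[B k, B (k + 1))` and avoids `N k (B k)`. Skipping
the indices `N k (B k)` puts it into two consecutive blocks, and its part in the first block is
more than `k` times its norm, against the FDD bound of this single skipped blocking. -/
theorem bddAbove_norm_permProj [CompleteSpace E]
    (h : ∀ n m : ℕ → ℕ, (∀ i, n i ≤ m i) → (∀ i, m i + 1 < n (i + 1)) →
      IsFDDof fun i => ⨆ j ∈ Set.Icc (n i) (m i), Submodule.span ℝ {b (π j)}) :
    BddAbove (Set.range fun N => ‖b.permProj π (Finset.range N)‖) := by
  by_contra hQ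
  choose N hbN S z hS hz using fun (k b₀ : ℕ) => b.exists_hump π hQ k.cast_nonneg b₀
  let B : ℕ → ℕ := fun k => Nat.rec 0 (fun k Bk => N k Bk + 2 + (S k Bk).sup id) k
  have hB : ∀ k, B (k + 1) = N k (B k) + 2 + (S k (B k)).sup id := fun _ => rfl
  have hgap : ∀ k, N k (B k) + 2 ≤ N (k + 1) (B (k + 1)) := fun k => by
    have := hbN (k + 1) (B (k + 1)); have := hB k; omega
  have hsup : ∀ k, ∀ j ∈ S k (B k), j < N (k + 1) (B (k + 1)) := fun k j hj => by
    have := hbN (k + 1) (B (k + 1)); have := hB k; have : j ≤ _ := Finset.le_sup (f := id) hj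
    omega
  obtain ⟨C, hC⟩ := (h (fun i => N i (B i) + 1) (fun i => N (i + 1) (B (i + 1)) - 1)
    (fun i => by have := hgap i; omega) (fun i => by have := hgap i; omega)).exists_norm_le_norm_add
    (fun _ => isClosed_iSup_span_Icc _ _ _)
  obtain ⟨k, hk⟩ := exists_nat_ge C
  set y := b.permProj π (S (k + 1) (B (k + 1))) (z (k + 1) (B (k + 1)))
  set u := b.permProj π (Finset.range (N (k + 1) (B (k + 1)))) y
  have hu : u ∈ ⨆ j ∈ Set.Icc (N k (B k) + 1) (N (k + 1) (B (k + 1)) - 1),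
      Submodule.span ℝ {b (π j)} := by
    rw [show u = _ from b.permProj_comp π _ _ _]
    refine b.permProj_mem_iSup_span π (fun j hj => ?_) _
    simp only [Finset.coe_inter, Set.mem_inter_iff, Finset.mem_coe, Finset.mem_range] at hj
    have := hS _ _ j hj.2; have := hB k
    simp only [Set.mem_Icc]; omega
  have hv : y - u ∈ ⨆ j ∈ Set.Icc (N (k + 1) (B (k + 1)) + 1) (N (k + 1 + 1) (B (k + 1 + 1)) - 1),
      Submodule.span ℝ {b (π j)} := by
    rw [show u = _ from b.permProj_comp π _ _ _, Finset.inter_comm,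
      ← eq_sub_of_add_eq' (b.permProj_inter_add_sdiff π _ _ _)]
    refine b.permProj_mem_iSup_span π (fun j hj => ?_) _
    simp only [Finset.coe_sdiff, Set.mem_sdiff, Finset.mem_coe, Finset.mem_range] at hj
    have := hS _ _ j hj.1; have := hsup (k + 1) j hj.1
    simp only [Set.mem_Icc]; omega
  have h1 := hC k u (y - u) hu hv
  have h2 := hz (k + 1) (B (k + 1))
  rw [add_sub_cancel] at h1
  push_cast at h2
  nlinarith [norm_nonneg y]

end Perm

end SchauderBasis

/-- For a Schauder basis `(e i)` of `X` and a permutation `π`, the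
one-dimensional subspaces `span {e (π n)}` always form a DDD, and they form an
SBD iff `(e (π n))` is itself a Schauder basis. -/
theorem stmt4 [CompleteSpace E] (e : ℕ → E) (hbasis : IsSchauderBasis e)
    (π : Equiv.Perm ℕ) :
    IsDDD (fun n => Submodule.span ℝ {e (π n)}) ∧
    (IsSBD (fun n => Submodule.span ℝ {e (π n)}) ↔ IsSchauderBasis (fun n => e (π n))) := by
  obtain ⟨b, rfl⟩ := hbasis.exists_schauderBasis
  refine ⟨b.isDDD_perm π, fun h => ?_, fun h => ⟨b.isDDD_perm π, fun n m hnm hskip => ?_⟩⟩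
  · exact b.isSchauderBasis_perm_of_bddAbove π (b.bddAbove_norm_permProj π h.2)
  · obtain ⟨b', hb'⟩ := h.exists_schauderBasis
    have := b'.isFDDof_blocks hnm fun i => (Nat.lt_succ_self _).trans (hskip i)
    simpa only [hb'] using this
end

section
/- Let (X_n) be a DDD of a Banach space X, with X_n^* = [X_m]^⊥_{m≠n} ⊂ X^* and Y = closed span of ∪ X_n^*. Then there is a blocking (X[m(i−1)+1, m(i)]) of (X_n) such that the corresponding dual sequence (Y[m(i−1)+1, m(i)]) = ([X_n^*]_{m(i−1)<n≤m(i)}) is a skipped-blocking decomposition of Y. -/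
open Submodule Set Filter Topology

variable {E : Type*} [NormedAddCommGroup E] [NormedSpace ℝ E]

/-!
Since `X_j^*` annihilates `X_k` for `k ≠ j` and `[X_n]` is dense, each `X_n^*` embeds into the
dual of `X_n`, so it is finite-dimensional. By compactness of the unit sphere of the
finite-dimensional space `[X_j^*]_{j<a}`, some `[X_k]_{k<b}` with `b > a` is 1/2-norming for
it; iterating gives the blocking `m`. Take a skipped sequence of blocks and let `g` be one past
the last index of its `q`-th member. The sum of the first `q + 1` members lies in
`[X_j^*]_{j<m(g)}`, so it is 1/2-normed by `[X_k]_{k<m(g+1)}`, on which every later member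
vanishes because of the skip. Hence all partial-sum projections have norm at most `2`, and
Grunblum's criterion makes the skipped blocks an FDD of their closed span.
-/

section PartialSums

variable {F : Type*} [NormedAddCommGroup F] [NormedSpace ℝ F]

def PartialSumBound (B : ℕ → Submodule ℝ F) (K : ℝ) : Prop :=
  ∀ v : ℕ → F, (∀ i, v i ∈ B i) → ∀ p N, p ≤ N →
    ‖∑ i ∈ Finset.range p, v i‖ ≤ K * ‖∑ i ∈ Finset.range N, v i‖

theorem exists_tendsto_sum_range_of_mem_iSup {B : ℕ → Submodule ℝ F} {x : F}
    (hx : x ∈ ⨆ i, B i) :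
    ∃ v : ℕ → F, (∀ i, v i ∈ B i) ∧
      Tendsto (fun N => ∑ i ∈ Finset.range N, v i) atTop (𝓝 x) := by
  obtain ⟨f, hfB, rfl⟩ := (mem_iSup_iff_exists_finsupp B x).1 hx
  obtain ⟨n, hn⟩ := f.support.exists_nat_subset_range
  refine ⟨f, hfB, tendsto_atTop_of_eventually_const (i₀ := n) fun N hN => ?_⟩
  exact (f.sum_of_support_subset (hn.trans (Finset.range_subset_range.2 hN)) (fun _ xi => xi)
    fun _ _ => rfl).symm

namespace PartialSumBound

variable {B : ℕ → Submodule ℝ F} {K : ℝ}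

theorem norm_sum_range_le_of_tendsto (hB : PartialSumBound B K) {v : ℕ → F}
    (hv : ∀ i, v i ∈ B i) {s : F}
    (hs : Tendsto (fun N => ∑ i ∈ Finset.range N, v i) atTop (𝓝 s)) (p : ℕ) :
    ‖∑ i ∈ Finset.range p, v i‖ ≤ K * ‖s‖ :=
  ge_of_tendsto (hs.norm.const_mul K) (eventually_atTop.2 ⟨p, hB v hv p⟩)

theorem eq_zero_of_tendsto_zero (hB : PartialSumBound B K) {v : ℕ → F} (hv : ∀ i, v i ∈ B i)
    (h0 : Tendsto (fun N => ∑ i ∈ Finset.range N, v i) atTop (𝓝 0)) : v = 0 := by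
  have hS : ∀ p, ∑ i ∈ Finset.range p, v i = 0 := fun p =>
    norm_le_zero_iff.1 (by simpa using hB.norm_sum_range_le_of_tendsto hv h0 p)
  funext i
  have := hS (i + 1)
  rwa [Finset.sum_range_succ, hS i, zero_add] at this

theorem exists_tendsto [CompleteSpace F] (hB : PartialSumBound B K)
    (hclosed : ∀ i, IsClosed (B i : Set F)) {y : F} (hy : y ∈ (⨆ i, B i).topologicalClosure) :
    ∃ w : ℕ → F, (∀ i, w i ∈ B i) ∧
      Tendsto (fun N => ∑ i ∈ Finset.range N, w i) atTop (𝓝 y) := by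
  obtain ⟨u, hu_mem, hu⟩ := mem_closure_iff_seq_limit.1 hy
  choose z hzB hz using fun k => exists_tendsto_sum_range_of_mem_iSup (hu_mem k)
  set S : ℕ → ℕ → F := fun k N => ∑ i ∈ Finset.range N, z k i
  have hdist : ∀ k l N, dist (S k N) (S l N) ≤ K * dist (u k) (u l) := by
    intro k l N
    simpa [S, dist_eq_norm, Finset.sum_sub_distrib] using
      hB.norm_sum_range_le_of_tendsto (fun i => sub_mem (hzB k i) (hzB l i))
        (by simpa [Finset.sum_sub_distrib] using (hz k).sub (hz l)) N
  have hunif : UniformCauchySeqOn S atTop univ := by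
    rw [Metric.uniformCauchySeqOn_iff]
    intro ε hε
    have hK := (cauchySeq_iff_tendsto_dist_atTop_0.1 hu.cauchySeq).const_mul K
    rw [mul_zero] at hK
    obtain ⟨⟨a, b⟩, hab⟩ := eventually_atTop.1 (hK.eventually (gt_mem_nhds hε))
    exact ⟨max a b, fun k hk l hl N _ => (hdist k l N).trans_lt
      (hab (k, l) ⟨le_of_max_le_left hk, le_of_max_le_right hl⟩)⟩
  choose Q hQ using fun N => cauchySeq_tendsto_of_complete (hunif.cauchySeq (mem_univ N))
  -- interchange of limits: `S k → Q` uniformly and `S k N → u k` as `N → ∞`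
  have hQy : Tendsto Q atTop (𝓝 y) :=
    (tendstoUniformlyOn_univ.1 (hunif.tendstoUniformlyOn_of_tendsto fun N _ => hQ N)
      ).tendsto_of_eventually_tendsto (Eventually.of_forall hz) hu
  refine ⟨fun i => Q (i + 1) - Q i, fun i => ?_, ?_⟩
  · refine (hclosed i).mem_of_tendsto ((hQ (i + 1)).sub (hQ i)) (Eventually.of_forall fun k => ?_)
    simpa [S, Finset.sum_range_succ] using hzB k i
  · have hQ0 : Q 0 = 0 := tendsto_nhds_unique (hQ 0) (by simp [S])
    simpa only [Finset.sum_range_sub, hQ0, sub_zero] using hQy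

theorem isFDDof [CompleteSpace F] (hB : PartialSumBound B K)
    (hclosed : ∀ i, IsClosed (B i : Set F)) : IsFDDof B := by
  intro y hy
  obtain ⟨w, hwB, hw⟩ := hB.exists_tendsto hclosed hy
  refine ⟨w, ⟨hwB, hw⟩, fun w' ⟨hw'B, hw'⟩ => ?_⟩
  have := hB.eq_zero_of_tendsto_zero (fun i => sub_mem (hw'B i) (hwB i))
    (by simpa [Finset.sum_sub_distrib] using hw'.sub hw)
  exact funext fun i => sub_eq_zero.1 (congrFun this i)

end PartialSumBound

end PartialSums

theorem monotone_biSup_Iio {α : Type*} [CompleteLattice α] (Y : ℕ → α) :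
    Monotone fun b => ⨆ j ∈ Iio b, Y j :=
  fun _ _ hbb' => biSup_mono fun _ hj => lt_of_lt_of_le hj hbb'

theorem iSup_biSup_Iio {α : Type*} [CompleteLattice α] (Y : ℕ → α) :
    ⨆ b, ⨆ j ∈ Iio b, Y j = ⨆ n, Y n :=
  le_antisymm (iSup_le fun _ => iSup₂_le fun j _ => le_iSup Y j)
    (iSup_le fun n => le_iSup_of_le (n + 1) (le_biSup Y (Nat.lt_succ_self n)))

theorem lt_of_skipped {a b : ℕ → ℕ} (hab : ∀ i, a i ≤ b i) (hskip : ∀ i, b i + 1 < a (i + 1))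
    {i j : ℕ} (hij : i < j) : b i + 1 < a j := by
  induction j, hij using Nat.le_induction with
  | base => exact hskip i
  | succ j _ ih => have := hab j; have := hskip j; omega

theorem biSup_Icc_biSup_Ico_le {α : Type*} [CompleteLattice α] (Y : ℕ → α) {m : ℕ → ℕ}
    (hm : Monotone m) (p q : ℕ) :
    ⨆ j ∈ Icc p q, ⨆ k ∈ Ico (m j) (m (j + 1)), Y k ≤ ⨆ k ∈ Ico (m p) (m (q + 1)), Y k :=
  iSup₂_le fun _ hj => biSup_mono fun _ hk =>
    ⟨(hm hj.1).trans hk.1, hk.2.trans_le (hm (Nat.succ_le_succ hj.2))⟩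

theorem exists_strictMono_of_forall_exists_lt (P : ℕ → ℕ → Prop) (h : ∀ a, ∃ b, a < b ∧ P a b) :
    ∃ m : ℕ → ℕ, m 0 = 0 ∧ StrictMono m ∧ ∀ k, P (m k) (m (k + 1)) := by
  choose next hlt hP using h
  refine ⟨fun k => next^[k] 0, rfl, strictMono_nat_of_lt_succ fun k => ?_, fun k => ?_⟩
  · simpa only [Function.iterate_succ_apply'] using hlt _
  · simpa only [Function.iterate_succ_apply'] using hP _

theorem finiteDimensional_biSup (Y : ℕ → Submodule ℝ E) [∀ n, FiniteDimensional ℝ (Y n)]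
    {s : Set ℕ} (hs : s.Finite) : FiniteDimensional ℝ ↥(⨆ j ∈ s, Y j) := by
  rw [iSup_subtype']
  have : Finite s := hs
  exact Submodule.finiteDimensional_iSup _

theorem mem_ann_iff_le_ker {S : Submodule ℝ E} {f : E →L[ℝ] ℝ} :
    f ∈ ann S ↔ S ≤ LinearMap.ker (f : E →ₗ[ℝ] ℝ) :=
  Iff.rfl

theorem ann_antitone : Antitone (ann : Submodule ℝ E → Submodule ℝ (E →L[ℝ] ℝ)) :=
  fun _ _ hST _ hf x hx => hf x (hST hx)

theorem isClosed_ann (S : Submodule ℝ E) : IsClosed (ann S : Set (E →L[ℝ] ℝ)) := by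
  have : (ann S : Set (E →L[ℝ] ℝ)) = ⋂ x ∈ S, {f | f x = 0} := by
    ext f
    simp [ann]
  exact this ▸ isClosed_biInter fun x _ =>
    isClosed_eq (ContinuousLinearMap.apply ℝ ℝ x).continuous continuous_const

theorem eq_zero_of_forall_le_ker {X : ℕ → Submodule ℝ E}
    (htot : (⨆ n, X n).topologicalClosure = ⊤) {f : E →L[ℝ] ℝ}
    (hf : ∀ n, X n ≤ LinearMap.ker (f : E →ₗ[ℝ] ℝ)) : f = 0 := by
  have := topologicalClosure_minimal _ (iSup_le hf) f.isClosed_ker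
  rw [htot, top_le_iff] at this
  ext x
  simpa using this.ge (mem_top (x := x))

theorem exists_apply_gt_of_dense {S : Submodule ℝ E} (hS : S.topologicalClosure = ⊤)
    (y : E →L[ℝ] ℝ) {r : ℝ} (hr : r < ‖y‖) : ∃ x ∈ S, ‖x‖ < 1 ∧ r < ‖y x‖ := by
  obtain ⟨x₀, hx₀⟩ := y.exists_lt_apply_of_lt_opNorm hr
  exact (dense_iff_topologicalClosure_eq_top.2 hS).exists_mem_open
    ((isOpen_lt continuous_norm continuous_const).inter
      (isOpen_lt continuous_const (continuous_norm.comp y.continuous))) ⟨x₀, hx₀⟩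

theorem eventually_norming {V : ℕ → Submodule ℝ E} (hV : Monotone V)
    (hdense : (⨆ b, V b).topologicalClosure = ⊤) (G : Submodule ℝ (E →L[ℝ] ℝ))
    [FiniteDimensional ℝ G] :
    ∀ᶠ b in atTop, ∀ y ∈ G, ∃ x ∈ V b, ‖x‖ ≤ 1 ∧ ‖y‖ ≤ 2 * ‖y x‖ := by
  let U : ℕ → Set G := fun b =>
    ⋃ x ∈ V b, ⋃ (_ : ‖x‖ < 1), {y | ‖(y : E →L[ℝ] ℝ)‖ < 2 * ‖(y : E →L[ℝ] ℝ) x‖}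
  have hUopen : ∀ b, IsOpen (U b) := fun _ => isOpen_biUnion fun _ _ => isOpen_iUnion fun _ =>
    isOpen_lt (by fun_prop) (by fun_prop)
  have hUmono : Monotone U := fun _ _ hbb' =>
    biUnion_mono (fun _ hx => hV hbb' hx) fun _ _ => le_rfl
  have hcover : Metric.sphere (0 : G) 1 ⊆ ⋃ b, U b := by
    intro y hy
    replace hy : ‖(y : E →L[ℝ] ℝ)‖ = 1 := mem_sphere_zero_iff_norm.1 hy
    obtain ⟨x, hxV, hx1, hyx⟩ := exists_apply_gt_of_dense hdense (y : E →L[ℝ] ℝ)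
      (show 1 / 2 < ‖(y : E →L[ℝ] ℝ)‖ by rw [hy]; norm_num)
    obtain ⟨b, hxb⟩ := (mem_iSup_of_directed V hV.directed_le).1 hxV
    refine mem_iUnion.2 ⟨b, mem_biUnion hxb (mem_iUnion.2 ⟨hx1, ?_⟩)⟩
    change ‖(y : E →L[ℝ] ℝ)‖ < _
    linarith
  obtain ⟨b, hb⟩ := (isCompact_sphere (0 : G) 1).elim_directed_cover U hUopen hcover
    hUmono.directed_le
  refine eventually_atTop.2 ⟨b, fun b' hbb' y hy => ?_⟩
  rcases eq_or_ne y 0 with rfl | hy0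
  · exact ⟨0, zero_mem _, by simp⟩
  have hny : 0 < ‖y‖ := norm_pos_iff.2 hy0
  have hunit : (⟨‖y‖⁻¹ • y, G.smul_mem _ hy⟩ : G) ∈ Metric.sphere (0 : G) 1 :=
    mem_sphere_zero_iff_norm.2 (norm_smul_inv_norm hy0)
  obtain ⟨x, hxV, hx⟩ := mem_iUnion₂.1 (hb hunit)
  obtain ⟨hx1, hyx⟩ := mem_iUnion.1 hx
  replace hyx : ‖‖y‖⁻¹ • y‖ < 2 * ‖(‖y‖⁻¹ • y) x‖ := hyx
  rw [smul_apply, norm_smul, norm_smul, norm_inv, norm_norm,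
    inv_mul_cancel₀ hny.ne', ← mul_assoc, mul_comm 2, mul_assoc, ← div_eq_inv_mul,
    lt_div_iff₀ hny, one_mul] at hyx
  exact ⟨x, hV hbb' hxV, hx1.le, hyx.le⟩

section Biorthogonal

variable {X : ℕ → Submodule ℝ E} {Xstar : ℕ → Submodule ℝ (E →L[ℝ] ℝ)}

theorem biSup_le_ann_of_notMem (hbi : ∀ j k, j ≠ k → Xstar j ≤ ann (X k)) {s : Set ℕ} {k : ℕ}
    (hk : k ∉ s) : ⨆ j ∈ s, Xstar j ≤ ann (X k) :=
  iSup₂_le fun j hj => hbi j k (ne_of_mem_of_not_mem hj hk)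

theorem apply_eq_zero_of_disjoint (hbi : ∀ j k, j ≠ k → Xstar j ≤ ann (X k)) {s t : Set ℕ}
    (hst : Disjoint s t) {f : E →L[ℝ] ℝ} (hf : f ∈ ⨆ j ∈ s, Xstar j) {x : E}
    (hx : x ∈ ⨆ k ∈ t, X k) : f x = 0 :=
  (iSup₂_le fun _ hk => mem_ann_iff_le_ker.1
    (biSup_le_ann_of_notMem hbi (Set.disjoint_right.1 hst hk) hf) :
      ⨆ k ∈ t, X k ≤ LinearMap.ker (f : E →ₗ[ℝ] ℝ)) hx

theorem eq_zero_of_mem_biSup_of_mem_closure_compl (hbi : ∀ j k, j ≠ k → Xstar j ≤ ann (X k))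
    (htot : (⨆ n, X n).topologicalClosure = ⊤) {s : Set ℕ} {f : E →L[ℝ] ℝ}
    (hf : f ∈ ⨆ j ∈ s, Xstar j) (hf' : f ∈ (⨆ j ∈ sᶜ, Xstar j).topologicalClosure) : f = 0 := by
  refine eq_zero_of_forall_le_ker htot fun k => mem_ann_iff_le_ker.1 ?_
  by_cases hk : k ∈ s
  · exact topologicalClosure_minimal _ (biSup_le_ann_of_notMem hbi (notMem_compl_iff.2 hk))
      (isClosed_ann _) hf'
  · exact biSup_le_ann_of_notMem hbi hk hf

theorem finiteDimensional_of_biorthogonal (hbi : ∀ j k, j ≠ k → Xstar j ≤ ann (X k))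
    (htot : (⨆ n, X n).topologicalClosure = ⊤) (n : ℕ) [FiniteDimensional ℝ (X n)] :
    FiniteDimensional ℝ (Xstar n) := by
  let restrict := ContinuousLinearMap.lcomp ℝ (X n).subtypeL ∘ₗ (Xstar n).subtype
  refine FiniteDimensional.of_injective restrict ((injective_iff_map_eq_zero _).2 fun f hf => ?_)
  refine Subtype.ext (eq_zero_of_forall_le_ker htot fun k x hx => ?_)
  rcases eq_or_ne n k with rfl | hnk
  · exact congr($hf ⟨x, hx⟩)
  · exact hbi n k hnk f.2 x hx

end Biorthogonal

section Blocking

variable {X : ℕ → Submodule ℝ E} {Xstar : ℕ → Submodule ℝ (E →L[ℝ] ℝ)} {m : ℕ → ℕ}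

theorem partialSumBound_skipped (hbi : ∀ j k, j ≠ k → Xstar j ≤ ann (X k)) (hm : Monotone m)
    (hnorm : ∀ k, ∀ y ∈ ⨆ j ∈ Iio (m k), Xstar j,
      ∃ x ∈ ⨆ j ∈ Iio (m (k + 1)), X j, ‖x‖ ≤ 1 ∧ ‖y‖ ≤ 2 * ‖y x‖)
    {a b : ℕ → ℕ} (hab : ∀ i, a i ≤ b i) (hskip : ∀ i, b i + 1 < a (i + 1)) :
    PartialSumBound (fun i => ⨆ j ∈ Icc (a i) (b i), ⨆ k ∈ Ico (m j) (m (j + 1)), Xstar k) 2 := by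
  intro z hz p N hpN
  have hflat := fun i => biSup_Icc_biSup_Ico_le Xstar hm (a i) (b i) (hz i)
  rcases p with _ | q
  · simp
  set g := b q + 1
  have hhead : ∑ i ∈ Finset.range (q + 1), z i ∈ ⨆ j ∈ Iio (m g), Xstar j := by
    refine sum_mem fun i hi => biSup_mono (f := Xstar)
      (fun k (hk : k ∈ Ico _ _) => hk.2.trans_le (hm ?_)) (hflat i)
    rcases (Nat.lt_succ_iff.1 (Finset.mem_range.1 hi)).lt_or_eq with hiq | rfl
    · have := lt_of_skipped hab hskip hiq; have := hab q; omega
    · exact le_rfl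
  have htail : ∀ i ≥ q + 1, z i ∈ ⨆ j ∈ Ici (m (g + 1)), Xstar j := fun i hi =>
    biSup_mono (f := Xstar)
      (fun k (hk : k ∈ Ico _ _) => (hm (lt_of_skipped hab hskip hi)).trans hk.1) (hflat i)
  obtain ⟨x, hx, hx1, hnormx⟩ := hnorm g _ hhead
  have hsum_apply : (∑ i ∈ Finset.range N, z i) x = (∑ i ∈ Finset.range (q + 1), z i) x := by
    rw [← Finset.sum_range_add_sum_Ico _ hpN, add_apply, add_eq_left, sum_apply]
    exact Finset.sum_eq_zero fun i hi => apply_eq_zero_of_disjoint hbi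
      (Iio_disjoint_Ici le_rfl).symm (htail i (Finset.mem_Ico.1 hi).1) hx
  calc ‖∑ i ∈ Finset.range (q + 1), z i‖ ≤ 2 * ‖(∑ i ∈ Finset.range (q + 1), z i) x‖ := hnormx
    _ = 2 * ‖(∑ i ∈ Finset.range N, z i) x‖ := by rw [hsum_apply]
    _ ≤ 2 * ‖∑ i ∈ Finset.range N, z i‖ := by
      gcongr
      exact ContinuousLinearMap.unit_le_opNorm _ _ hx1

theorem blocks_inf_closure_eq_bot (hbi : ∀ j k, j ≠ k → Xstar j ≤ ann (X k))
    (htot : (⨆ n, X n).topologicalClosure = ⊤) (hm : StrictMono m) (n : ℕ) :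
    (⨆ j ∈ Ico (m n) (m (n + 1)), Xstar j) ⊓
      (⨆ i ∈ {i | i ≠ n}, ⨆ j ∈ Ico (m i) (m (i + 1)), Xstar j).topologicalClosure = ⊥ := by
  have hother : ⨆ i ∈ {i | i ≠ n}, ⨆ j ∈ Ico (m i) (m (i + 1)), Xstar j ≤
      ⨆ j ∈ (Ico (m n) (m (n + 1)))ᶜ, Xstar j := by
    refine iSup₂_le fun i hi => biSup_mono fun j hj hjn => ?_
    rcases Nat.lt_or_gt_of_ne hi with hin | hni
    · exact (hj.2.trans_le (hm.monotone hin)).not_ge hjn.1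
    · exact (hjn.2.trans_le (hm.monotone hni)).not_ge hj.1
  refine eq_bot_iff.2 fun f hf => (mem_bot ℝ).2 ?_
  exact eq_zero_of_mem_biSup_of_mem_closure_compl hbi htot (mem_inf.1 hf).1
    (topologicalClosure_mono hother (mem_inf.1 hf).2)

end Blocking

theorem stmt5_general (X : ℕ → Submodule ℝ E) (hX : IsDDD X)
    (Xstar : ℕ → Submodule ℝ (E →L[ℝ] ℝ))
    (hXstar : ∀ n, Xstar n = ann ((⨆ m ∈ {m | m ≠ n}, X m).topologicalClosure)) :
    ∃ m : ℕ → ℕ, m 0 = 0 ∧ StrictMono m ∧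
      IsSBDofSpan (fun i => ⨆ j ∈ Set.Ico (m i) (m (i + 1)), Xstar j) := by
  obtain ⟨hfd, htot, -⟩ := hX
  have hbi : ∀ j k, j ≠ k → Xstar j ≤ ann (X k) := fun j k hjk =>
    hXstar j ▸ ann_antitone ((le_biSup X hjk.symm).trans (le_topologicalClosure _))
  have hXstar_fd := finiteDimensional_of_biorthogonal hbi htot
  have hspan_fd (a : ℕ) : FiniteDimensional ℝ ↥(⨆ j ∈ Iio a, Xstar j) :=
    finiteDimensional_biSup Xstar (finite_Iio a)
  obtain ⟨m, hm0, hm, hnorm⟩ := exists_strictMono_of_forall_exists_lt _ fun a =>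
    ((eventually_norming (monotone_biSup_Iio X) (by rwa [iSup_biSup_Iio])
      (⨆ j ∈ Iio a, Xstar j)).and (eventually_gt_atTop a)).exists.imp fun _ hb => ⟨hb.2, hb.1⟩
  have hW (i : ℕ) : FiniteDimensional ℝ ↥(⨆ j ∈ Ico (m i) (m (i + 1)), Xstar j) :=
    finiteDimensional_biSup Xstar (finite_Ico _ _)
  refine ⟨m, hm0, hm, hW, blocks_inf_closure_eq_bot hbi htot hm, fun a b hab hskip =>
    (partialSumBound_skipped hbi hm.monotone hnorm hab hskip).isFDDof fun i => ?_⟩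
  have hB_fd := finiteDimensional_biSup (fun j => ⨆ k ∈ Ico (m j) (m (j + 1)), Xstar k)
    (finite_Icc (a i) (b i))
  exact closed_of_finiteDimensional _

/-- For any DDD `(X n)` with dual spaces `X_n^* = ann [X_m]_{m≠n}`,
there is a blocking such that the corresponding blocked dual sequence is a
skipped blocking decomposition of the predecomposition space
`Y = [X_n^*]` (its closed linear span). -/
theorem stmt5 [CompleteSpace E] (X : ℕ → Submodule ℝ E) (hX : IsDDD X)
    (Xstar : ℕ → Submodule ℝ (E →L[ℝ] ℝ))
    (hXstar : ∀ n, Xstar n = ann ((⨆ m ∈ {m | m ≠ n}, X m).topologicalClosure)) :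
    ∃ m : ℕ → ℕ, m 0 = 0 ∧ StrictMono m ∧
      IsSBDofSpan (fun i => ⨆ j ∈ Set.Ico (m i) (m (i + 1)), Xstar j) :=
  stmt5_general X hX Xstar hXstar
end

section
/- For any Schauder basis (e_n) of a Banach space X and any permutation π of ℕ, the permuted sequence (e_{π(n)}) can be blocked to form a skipped-blocking decomposition: there exist 0 = m(0) < m(1) < ... such that the blocks ([e_{π(j)} : m(i−1) < j ≤ m(i)])_i form an SBD of X. -/
/-!
The coordinate functionals of a Schauder basis in the sense of unique expansions are continuous:
the convergent partial-sum sequences form a Banach space on which summation is a continuous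
bijection onto `E`, hence an isomorphism by the open mapping theorem. Block `i` of the permuted
basis is spanned by the original basis vectors with indices in a finite set `A i`, and the
blocking is chosen so that `A i ⊆ [c (i - 1), c (i + 1))` for an increasing `c`. A union of
consecutive blocks followed by a skipped block therefore occupies its own window of original
indices, so the partial sums of a skipped blocking are the original basis projections at the
window ends, and these converge.
-/

open Submodule Set Filter Topology

variable {E : Type*} [NormedAddCommGroup E] [NormedSpace ℝ E]

open scoped OnePoint

theorem OnePoint.continuousMapMkNat_coe {Y : Type*} [TopologicalSpace Y] (f : ℕ → Y)
    (y : Y) (h : Tendsto f atTop (𝓝 y)) (N : ℕ) : OnePoint.continuousMapMkNat f y h N = f N :=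
  rfl

theorem OnePoint.continuousMapMkNat_infty {Y : Type*} [TopologicalSpace Y] (f : ℕ → Y)
    (y : Y) (h : Tendsto f atTop (𝓝 y)) : OnePoint.continuousMapMkNat f y h ∞ = y :=
  rfl

noncomputable section

namespace IsSchauderBasis

variable {e : ℕ → E}

theorem ne_zero_s6 (hb : IsSchauderBasis e) (k : ℕ) : e k ≠ 0 := by
  intro hk
  obtain ⟨a, -, ha⟩ := hb 0
  have hzero : ∀ c : ℕ → ℝ, (∀ i ≠ k, c i = 0) →
      Tendsto (fun N => ∑ i ∈ Finset.range N, c i • e i) atTop (𝓝 0) := by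
    refine fun c hc => tendsto_const_nhds.congr fun N => (Finset.sum_eq_zero fun i _ => ?_).symm
    rcases eq_or_ne i k with rfl | hi
    · simp [hk]
    · simp [hc i hi]
  have := (ha _ (hzero (Pi.single k 1) fun i hi => Pi.single_eq_of_ne hi 1)).trans
    (ha _ (hzero 0 fun _ _ => rfl)).symm
  simpa using congrFun this k

/-- Convergent partial sums `u N = ∑ i < N, a i • e i` along `e`, as continuous functions on
`ℕ ∪ {∞}` with the sum stored at `∞`. -/
def partialSums (e : ℕ → E) : Submodule ℝ C(OnePoint ℕ, E) where
  carrier := {u | u (0 : ℕ) = 0 ∧ ∀ N : ℕ, u (N + 1 : ℕ) - u N ∈ span ℝ {e N}}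
  add_mem' := by
    rintro u v ⟨hu₀, hu⟩ ⟨hv₀, hv⟩
    refine ⟨by simp [hu₀, hv₀], fun N => ?_⟩
    simpa [add_sub_add_comm] using add_mem (hu N) (hv N)
  zero_mem' := ⟨rfl, fun N => by simp⟩
  smul_mem' := by
    rintro c u ⟨hu₀, hu⟩
    refine ⟨by simp [hu₀], fun N => ?_⟩
    simpa [← smul_sub] using smul_mem _ c (hu N)

theorem isClosed_partialSums : IsClosed (partialSums e : Set C(OnePoint ℕ, E)) := by
  have hev : ∀ x : OnePoint ℕ, Continuous fun u : C(OnePoint ℕ, E) => u x := fun x =>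
    (ContinuousMap.evalCLM ℝ x).continuous
  simp only [partialSums, Submodule.coe_set_mk, AddSubmonoid.coe_set_mk,
    AddSubsemigroup.coe_set_mk, ofPred_and, ofPred_forall]
  refine (isClosed_eq (hev _) continuous_const).inter (isClosed_iInter fun N => ?_)
  exact (span ℝ {e N}).closed_of_finiteDimensional.preimage ((hev _).sub (hev _))

theorem exists_coeffs_of_mem_partialSums {u : C(OnePoint ℕ, E)} (hu : u ∈ partialSums e) :
    ∃ a : ℕ → ℝ, ∀ N : ℕ, u N = ∑ i ∈ Finset.range N, a i • e i := by
  choose a ha using fun N => mem_span_singleton.mp (hu.2 N)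
  refine ⟨a, fun N => ?_⟩
  induction N with
  | zero => exact hu.1
  | succ N ih => rw [Finset.sum_range_succ, ← ih, ha N, add_sub_cancel]

theorem mkNat_mem_partialSums (a : ℕ → ℝ) {x : E}
    (ha : Tendsto (fun N => ∑ i ∈ Finset.range N, a i • e i) atTop (𝓝 x)) :
    OnePoint.continuousMapMkNat _ x ha ∈ partialSums e := by
  refine ⟨by simp [OnePoint.continuousMapMkNat_coe], fun N => ?_⟩
  simpa [OnePoint.continuousMapMkNat_coe, Finset.sum_range_succ] using
    smul_mem _ (a N) (mem_span_singleton_self (e N))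

def sumCLM (e : ℕ → E) : partialSums e →L[ℝ] E :=
  (ContinuousMap.evalCLM ℝ ∞).comp (partialSums e).subtypeL

theorem sumCLM_apply (u : partialSums e) : sumCLM e u = (u : C(OnePoint ℕ, E)) ∞ := rfl

theorem tendsto_partialSums (u : partialSums e) :
    Tendsto (fun N : ℕ => (u : C(OnePoint ℕ, E)) N) atTop (𝓝 (sumCLM e u)) :=
  (OnePoint.continuous_iff_from_nat _).mp (u : C(OnePoint ℕ, E)).continuous

theorem bijective_sumCLM (hb : IsSchauderBasis e) : Function.Bijective (sumCLM e) := by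
  refine ⟨(injective_iff_map_eq_zero _).mpr fun u hu => ?_, fun x => ?_⟩
  · obtain ⟨a, ha⟩ := exists_coeffs_of_mem_partialSums u.2
    have hlim : Tendsto (fun N => ∑ i ∈ Finset.range N, a i • e i) atTop (𝓝 0) := by
      simpa [← ha, ← hu] using tendsto_partialSums u
    obtain ⟨c, -, hc⟩ := hb 0
    have ha0 : a = 0 := (hc a hlim).trans (hc 0 (by simp)).symm
    ext x
    induction x using OnePoint.rec with
    | infty => simpa [sumCLM_apply] using hu
    | coe N => simp [ha N, ha0]
  · obtain ⟨a, ha, -⟩ := hb x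
    exact ⟨⟨_, mkNat_mem_partialSums a ha⟩, OnePoint.continuousMapMkNat_infty _ _ ha⟩

theorem tendsto_sum_single (j : ℕ) :
    Tendsto (fun N => ∑ i ∈ Finset.range N, (Pi.single j 1 : ℕ → ℝ) i • e i) atTop (𝓝 (e j)) :=
  tendsto_const_nhds.congr' <| (eventually_gt_atTop j).mono fun N hN => by
    simp [Pi.single_apply, hN]

variable [CompleteSpace E]

/-- The inverse is continuous by the open mapping theorem. -/
def sumEquiv (hb : IsSchauderBasis e) : partialSums e ≃L[ℝ] E :=
  haveI := isClosed_partialSums (e := e).completeSpace_coe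
  ContinuousLinearEquiv.ofBijective (sumCLM e)
    (LinearMap.ker_eq_bot.mpr (bijective_sumCLM hb).1)
    (LinearMap.range_eq_top.mpr (bijective_sumCLM hb).2)

def increment (e : ℕ → E) (k : ℕ) : partialSums e →L[ℝ] span ℝ {e k} :=
  ((ContinuousMap.evalCLM ℝ ((k + 1 : ℕ) : OnePoint ℕ) - ContinuousMap.evalCLM ℝ (k : OnePoint ℕ) :
    C(OnePoint ℕ, E) →L[ℝ] E).comp (partialSums e).subtypeL).codRestrict _
    fun u => by simpa using u.2.2 k

def coord (hb : IsSchauderBasis e) (k : ℕ) : StrongDual ℝ E :=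
  (ContinuousLinearEquiv.coord ℝ (e k) (hb.ne_zero_s6 k)).comp
    ((increment e k).comp ((sumEquiv hb).symm : E →L[ℝ] partialSums e))

theorem coord_smul (hb : IsSchauderBasis e) (k : ℕ) (x : E) :
    hb.coord k x • e k = ((sumEquiv hb).symm x : C(OnePoint ℕ, E)) (k + 1 : ℕ) -
      ((sumEquiv hb).symm x : C(OnePoint ℕ, E)) k :=
  congrArg Subtype.val (ContinuousLinearEquiv.toSpanNonzeroSingleton_coord ℝ
    (hb.ne_zero_s6 k) (increment e k ((sumEquiv hb).symm x)))

theorem tendsto_sum_coord (hb : IsSchauderBasis e) (x : E) :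
    Tendsto (fun N => ∑ k ∈ Finset.range N, hb.coord k x • e k) atTop (𝓝 x) := by
  set u := (sumEquiv hb).symm x
  have hsum : ∀ N, ∑ k ∈ Finset.range N, hb.coord k x • e k = (u : C(OnePoint ℕ, E)) N := by
    intro N
    simp only [coord_smul]
    rw [Finset.sum_range_sub (fun N : ℕ => (u : C(OnePoint ℕ, E)) N), u.2.1, sub_zero]
  simpa only [hsum, show sumCLM e u = x from (sumEquiv hb).apply_symm_apply x] using
    tendsto_partialSums u

def toSchauderBasis (hb : IsSchauderBasis e) : SchauderBasis ℝ E where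
  basis := e
  coord := hb.coord
  ortho i j := by
    obtain ⟨a, -, ha⟩ := hb (e j)
    rw [congrFun ((ha _ (tendsto_sum_coord hb (e j))).trans (ha _ (tendsto_sum_single j)).symm) i]
    -- the two `Pi.single`s are elaborated with different `DecidableEq ℕ` instances
    simp only [Pi.single_apply]
    congr
  expansion x := by
    rw [HasSum, SummationFilter.conditional_filter_eq_map_range, tendsto_map'_iff]
    exact tendsto_sum_coord hb x

end IsSchauderBasis

end

namespace GeneralSchauderBasis

variable {𝕜 X ι : Type*} [NontriviallyNormedField 𝕜] [NormedAddCommGroup X] [NormedSpace 𝕜 X]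
  {L : SummationFilter ι} (b : GeneralSchauderBasis ι 𝕜 X L)

theorem proj_eq_self_of_mem_span {A : Finset ι} {v : X} (hv : v ∈ span 𝕜 (b '' A)) :
    b.proj A v = v := by
  classical
  obtain ⟨y, rfl⟩ := (b.range_proj_eq_span A).ge hv
  exact (b.proj_comp A A y).trans (by rw [Finset.inter_self]; rfl)

theorem coord_eq_zero_of_mem_closure_span {S : Set ι} {k : ι} (hk : k ∉ S) {x : X}
    (hx : x ∈ (span 𝕜 (b '' S)).topologicalClosure) : b.coord k x = 0 := by
  classical
  have hspan : span 𝕜 (b '' S) ≤ LinearMap.ker (b.coord k : X →ₗ[𝕜] 𝕜) := by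
    rw [span_le]
    rintro _ ⟨j, hj, rfl⟩
    simp [b.ortho, show k ≠ j from fun h => hk (h ▸ hj)]
  exact topologicalClosure_minimal _ hspan (b.coord k).isClosed_ker hx

theorem span_inf_closure_span_eq_bot {A : Finset ι} {S : Set ι} (h : Disjoint (A : Set ι) S) :
    span 𝕜 (b '' A) ⊓ (span 𝕜 (b '' S)).topologicalClosure = ⊥ := by
  refine eq_bot_iff.mpr fun v ⟨hA, hS⟩ => ?_
  rw [Submodule.mem_bot, ← b.proj_eq_self_of_mem_span hA, proj_apply]
  refine Finset.sum_eq_zero fun k hk => ?_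
  rw [b.coord_eq_zero_of_mem_closure_span (h.notMem_of_mem_left hk) hS, zero_smul]

theorem topologicalClosure_span_range [L.NeBot] : (span 𝕜 (range b)).topologicalClosure = ⊤ := by
  refine eq_top_iff.mpr fun x _ => mem_closure_of_tendsto (b.tendsto_proj x) ?_
  refine Eventually.of_forall fun A => span_mono (image_subset_range _ (A : Set ι)) ?_
  exact b.range_proj_eq_span A ▸ LinearMap.mem_range_self _ x

theorem coord_eq_of_tendsto_sum {A : ℕ → Finset ι} (hA : Pairwise fun s t => Disjoint (A s) (A t))
    {v : ℕ → X} (hv : ∀ s, v s ∈ span 𝕜 (b '' A s)) {x : X}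
    (hx : Tendsto (fun K => ∑ s ∈ Finset.range K, v s) atTop (𝓝 x)) {t : ℕ} {k : ι}
    (hk : k ∈ A t) : b.coord k (v t) = b.coord k x := by
  have hvanish : ∀ s ≠ t, b.coord k (v s) = 0 := fun s hs =>
    b.coord_eq_zero_of_mem_closure_span (Finset.disjoint_left.mp (hA hs.symm) hk)
      (le_topologicalClosure _ (hv s))
  refine tendsto_nhds_unique (tendsto_const_nhds.congr' ?_)
    (((b.coord k).continuous.tendsto x).comp hx)
  filter_upwards [eventually_gt_atTop t] with K hK
  rw [Function.comp_apply, map_sum, Finset.sum_eq_single_of_mem t (Finset.mem_range.mpr hK)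
    fun s _ hs => hvanish s hs]

end GeneralSchauderBasis

/-- The partial sums of the block expansion of `x` are the basis projections `proj (β K) x`. -/
theorem SchauderBasis.isFDDof_span_image (b : SchauderBasis ℝ E) {A : ℕ → Finset ℕ}
    {β : ℕ → ℕ} (hβ : Monotone β) (hβ_tendsto : Tendsto β atTop atTop)
    (hA : ∀ t, A t ⊆ Finset.Ico (β t) (β (t + 1))) :
    IsFDDof fun t => span ℝ (b '' A t) := by
  classical
  have hlt : ∀ {t K k}, k ∈ A t → t < K → k < β K := fun hk htK =>
    (Finset.mem_Ico.mp (hA _ hk)).2.trans_le (hβ htK)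
  have hge : ∀ {t K k}, k ∈ A t → K ≤ t → β K ≤ k := fun hk hKt =>
    (hβ hKt).trans (Finset.mem_Ico.mp (hA _ hk)).1
  have hdisj : Pairwise fun s t => Disjoint (A s) (A t) := by
    refine fun s t hst => Finset.disjoint_left.mpr fun k hs ht => ?_
    rcases hst.lt_or_gt with h | h
    · exact (hlt hs h).not_ge (hge ht le_rfl)
    · exact (hlt ht h).not_ge (hge hs le_rfl)
  intro x hx
  rw [← span_iUnion, ← image_iUnion] at hx
  have hpartial :
      ∀ K, ∑ t ∈ Finset.range K, GeneralSchauderBasis.proj b (A t) x = b.proj (β K) x := by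
    intro K
    simp only [GeneralSchauderBasis.proj_apply, SchauderBasis.proj_apply]
    rw [← Finset.sum_biUnion fun s _ t _ hst => hdisj hst]
    refine Finset.sum_subset (fun k hk => ?_) fun k hkK hk => ?_
    · obtain ⟨t, ht, hkt⟩ := Finset.mem_biUnion.mp hk
      exact Finset.mem_range.mpr (hlt hkt (Finset.mem_range.mp ht))
    · have hkA : k ∉ ⋃ t, (A t : Set ℕ) := by
        simp only [mem_iUnion, Finset.mem_coe, not_exists]
        refine fun t hkt => hk (Finset.mem_biUnion.mpr ⟨t, Finset.mem_range.mpr ?_, hkt⟩)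
        by_contra hKt
        exact (Finset.mem_range.mp hkK).not_ge (hge hkt (not_lt.mp hKt))
      rw [b.coord_eq_zero_of_mem_closure_span hkA hx, zero_smul]
  refine ⟨fun t => GeneralSchauderBasis.proj b (A t) x, ⟨fun t => ?_, ?_⟩, ?_⟩
  · exact (GeneralSchauderBasis.range_proj_eq_span b (A t)).le (LinearMap.mem_range_self _ x)
  · exact ((b.tendsto_proj x).comp hβ_tendsto).congr fun K => (hpartial K).symm
  · rintro v ⟨hv, hvx⟩
    funext t
    rw [← b.proj_eq_self_of_mem_span (hv t), GeneralSchauderBasis.proj_apply,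
      GeneralSchauderBasis.proj_apply]
    exact Finset.sum_congr rfl fun k hk => by rw [b.coord_eq_of_tendsto_sum hdisj hv hvx hk]

theorem SchauderBasis.isDDD_span_image (b : SchauderBasis ℝ E) {A : ℕ → Finset ℕ}
    (hdisj : Pairwise fun s t => Disjoint (A s) (A t)) (hcover : ∀ k, ∃ i, k ∈ A i) :
    IsDDD fun i => span ℝ (b '' A i) := by
  refine ⟨fun i => FiniteDimensional.span_of_finite ℝ ((A i).finite_toSet.image _), ?_, fun i => ?_⟩
  · rw [iSup_span, ← image_iUnion, iUnion_eq_univ_iff.mpr (by simpa using hcover), image_univ]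
    exact b.topologicalClosure_span_range
  · simp_rw [← span_iUnion₂, ← image_iUnion₂]
    refine b.span_inf_closure_span_eq_bot (Set.disjoint_iUnion₂_right.mpr fun j hj => ?_)
    exact Finset.disjoint_coe.mpr (hdisj (Ne.symm hj))

/-- Since at least one block is skipped between consecutive unions `⋃ i ∈ [n t, m t], A i`,
these unions lie in the consecutive windows `[c (n t - 1), c (n (t + 1) - 1))`. -/
theorem SchauderBasis.isSBD_span_image (b : SchauderBasis ℝ E) {A : ℕ → Finset ℕ}
    (hdisj : Pairwise fun s t => Disjoint (A s) (A t)) (hcover : ∀ k, ∃ i, k ∈ A i)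
    {c : ℕ → ℕ} (hc : Monotone c) (hA : ∀ i, A i ⊆ Finset.Ico (c (i - 1)) (c (i + 1))) :
    IsSBD fun i => span ℝ (b '' A i) := by
  classical
  refine ⟨b.isDDD_span_image hdisj hcover, fun n m hnm hskip => ?_⟩
  have hc_tendsto : Tendsto c atTop atTop := tendsto_atTop_atTop_of_monotone hc fun k => by
    obtain ⟨i, hi⟩ := hcover k
    exact ⟨i + 1, (Finset.mem_Ico.mp (hA i hi)).2.le⟩
  have hn : StrictMono n := strictMono_nat_of_lt_succ fun t => by
    have := hnm t; have := hskip t; omega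
  have hsub : ∀ t, (Finset.Icc (n t) (m t)).biUnion A ⊆
      Finset.Ico (c (n t - 1)) (c (n (t + 1) - 1)) := by
    intro t k hk
    obtain ⟨i, hi, hki⟩ := Finset.mem_biUnion.mp hk
    obtain ⟨hi₁, hi₂⟩ := Finset.mem_Icc.mp hi
    obtain ⟨hk₁, hk₂⟩ := Finset.mem_Ico.mp (hA i hki)
    have := hskip t
    exact Finset.mem_Ico.mpr ⟨(hc (by omega)).trans hk₁, hk₂.trans_le (hc (by omega))⟩
  have hspan : ∀ t, (⨆ i ∈ Set.Icc (n t) (m t), span ℝ (b '' A i)) =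
      span ℝ (b '' ((Finset.Icc (n t) (m t)).biUnion A)) := by
    intro t
    rw [← span_iUnion₂, ← image_iUnion₂, Finset.coe_biUnion, Finset.coe_Icc]
  simp only [hspan]
  exact b.isFDDof_span_image (hc.comp fun s t hst => Nat.sub_le_sub_right (hn.monotone hst) 1)
    (hc_tendsto.comp ((tendsto_sub_atTop_nat 1).comp hn.tendsto_atTop)) hsub

def rangeBound (f : ℕ → ℕ) (m : ℕ) : ℕ :=
  (Finset.range m).sup fun j => f j + 1

theorem lt_rangeBound {f : ℕ → ℕ} {j m : ℕ} (h : j < m) : f j < rangeBound f m :=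
  Finset.le_sup (f := fun j => f j + 1) (Finset.mem_range.mpr h)

theorem rangeBound_mono (f : ℕ → ℕ) : Monotone (rangeBound f) := fun _ _ h =>
  Finset.sup_mono (Finset.range_subset_range.mpr h)

/-- The blocking of a permutation `π`: block `i + 1` is long enough that every `j` beyond it
has `π j` beyond the values `π` takes before block `i`. -/
def permBlocking (π : Equiv.Perm ℕ) : ℕ → ℕ
  | 0 => 0
  | i + 1 => max (permBlocking π i + 1) (rangeBound π.symm (rangeBound π (permBlocking π i)))

def permBlock (π : Equiv.Perm ℕ) (i : ℕ) : Finset ℕ :=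
  (Finset.Ico (permBlocking π i) (permBlocking π (i + 1))).image π

namespace permBlocking

variable (π : Equiv.Perm ℕ)

theorem strictMono : StrictMono (permBlocking π) :=
  strictMono_nat_of_lt_succ fun _ => (Nat.lt_succ_self _).trans_le (le_max_left _ _)

theorem rangeBound_le {i j : ℕ} (h : permBlocking π (i + 1) ≤ j) :
    rangeBound π (permBlocking π i) ≤ π j := by
  by_contra! hj
  have := lt_rangeBound (f := π.symm) hj
  rw [Equiv.symm_apply_apply] at this
  exact h.not_gt (this.trans_le (le_max_right _ _))

end permBlocking

namespace permBlock

variable (π : Equiv.Perm ℕ)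

theorem pairwise_disjoint : Pairwise fun s t => Disjoint (permBlock π s) (permBlock π t) := by
  intro s t hst
  rw [permBlock, permBlock, Finset.disjoint_image π.injective, Finset.disjoint_left]
  intro j hs ht
  obtain ⟨hs₁, hs₂⟩ := Finset.mem_Ico.mp hs
  obtain ⟨ht₁, ht₂⟩ := Finset.mem_Ico.mp ht
  have h₁ := (permBlocking.strictMono π).lt_iff_lt.mp (hs₁.trans_lt ht₂)
  have h₂ := (permBlocking.strictMono π).lt_iff_lt.mp (ht₁.trans_lt hs₂)
  omega

theorem exists_mem (k : ℕ) : ∃ i, k ∈ permBlock π i := by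
  have hk : π.symm k ∈ Set.Ico (permBlocking π 0) (permBlocking π (π.symm k + 1)) :=
    ⟨Nat.zero_le _, (Nat.lt_succ_self _).trans_le ((permBlocking.strictMono π).id_le _)⟩
  obtain ⟨i, -, hi⟩ := Set.mem_iUnion₂.mp (Ico_subset_biUnion_Ico _ _ hk)
  exact ⟨i, Finset.mem_image.mpr ⟨π.symm k, Finset.mem_Ico.mpr hi, π.apply_symm_apply k⟩⟩

theorem subset_Ico (i : ℕ) : permBlock π i ⊆
    Finset.Ico (rangeBound π (permBlocking π (i - 1))) (rangeBound π (permBlocking π (i + 1))) := by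
  intro k hk
  obtain ⟨j, hj, rfl⟩ := Finset.mem_image.mp hk
  obtain ⟨hj₁, hj₂⟩ := Finset.mem_Ico.mp hj
  refine Finset.mem_Ico.mpr ⟨?_, lt_rangeBound hj₂⟩
  rcases i with _ | i
  · exact Nat.zero_le _
  · exact permBlocking.rangeBound_le π hj₁

end permBlock

theorem iSup_span_singleton_Ico_eq_permBlock (e : ℕ → E) (π : Equiv.Perm ℕ) (i : ℕ) :
    (⨆ j ∈ Set.Ico (permBlocking π i) (permBlocking π (i + 1)), span ℝ {e (π j)}) =
      span ℝ (e '' permBlock π i) := by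
  rw [← span_iUnion₂, ← image_eq_iUnion, permBlock, Finset.coe_image, Finset.coe_Ico, image_image]

/-- For any Schauder basis `(e n)` of `X` and any permutation `π`,
the permuted sequence can be blocked to an SBD of `X`. -/
theorem stmt6 [CompleteSpace E] (e : ℕ → E) (hbasis : IsSchauderBasis e)
    (π : Equiv.Perm ℕ) :
    ∃ m : ℕ → ℕ, m 0 = 0 ∧ StrictMono m ∧
      IsSBD (fun i => ⨆ j ∈ Set.Ico (m i) (m (i + 1)),
        Submodule.span ℝ {e (π j)}) := by
  refine ⟨permBlocking π, rfl, permBlocking.strictMono π, ?_⟩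
  simp only [iSup_span_singleton_Ico_eq_permBlock]
  exact hbasis.toSchauderBasis.isSBD_span_image (permBlock.pairwise_disjoint π)
    (permBlock.exists_mem π)
    ((rangeBound_mono π).comp (permBlocking.strictMono π).monotone)
    (permBlock.subset_Ico π)
end

section
/- Let (X_n) be a DDD of X, x ∈ X, k ∈ ℕ, δ_k = dist(x, X[1,k−1]), P_k = Σ_{i≤k} p_i, and R_k the skipped projection at position k. Then ‖x‖ ≤ ‖R_k‖·‖P_k x‖ + δ_k(1 + ‖R_k‖). -/
open Submodule Set Filter Topology

variable {E : Type*} [NormedAddCommGroup E] [NormedSpace ℝ E]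

set_option synthInstance.maxHeartbeats 1000000
set_option maxHeartbeats 1000000

/-- For a DDD with projections `p i` (onto `X i` along the closed
span of the others), partial sum projection `P = Σ_{i ≤ k} p i`, skipped
projection `R` onto `A = X[0,k)` with kernel the tail `T = [X_i]_{i ≥ k+1}`
(skipping `X k`), and `δ = dist(x, A)`, one has
`‖x‖ ≤ ‖R‖·‖P x‖ + δ·(1 + ‖R‖)`. -/
theorem stmt8 [CompleteSpace E] (X : ℕ → Submodule ℝ E) (hX : IsDDD X)
    (p : ℕ → E →L[ℝ] E)
    (hp : ∀ n, LinearMap.range ((p n : E →ₗ[ℝ] E)) = X n ∧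
      LinearMap.ker ((p n : E →ₗ[ℝ] E)) = (⨆ m ∈ {m | m ≠ n}, X m).topologicalClosure ∧
      ∀ y ∈ X n, p n y = y)
    (k : ℕ) (A T : Submodule ℝ E) (hA : A = ⨆ i ∈ Set.Iio k, X i)
    (hT : T = (⨆ i ∈ Set.Ici (k + 1), X i).topologicalClosure)
    (R : ↥(A ⊔ T) →L[ℝ] E)
    (hR : ∀ a ∈ A, ∀ b ∈ T, ∀ h : a + b ∈ A ⊔ T, R ⟨a + b, h⟩ = a)
    (x : E) :
    ‖x‖ ≤ ‖R‖ * ‖(∑ i ∈ Finset.range (k + 1), p i) x‖ +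
      Metric.infDist x (A : Set E) * (1 + ‖R‖) := by
  classical
  set P : E →L[ℝ] E := ∑ i ∈ Finset.range (k + 1), p i with hPdef
  -- p j kills X i for i ≠ j
  have hkill : ∀ j i : ℕ, i ≠ j → ∀ y ∈ X i, p j y = 0 := by
    intro j i hij y hy
    have h1 : X i ≤ (⨆ m ∈ {m | m ≠ j}, X m).topologicalClosure :=
      le_trans (le_iSup₂ (f := fun m (_ : m ∈ {m | m ≠ j}) => X m) i hij)
        (Submodule.le_topologicalClosure _)
    have hy' : y ∈ LinearMap.ker ((p j : E →ₗ[ℝ] E)) := (hp j).2.1 ▸ h1 hy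
    simpa using hy'
  have hkerT : ∀ i, i ≤ k → ∀ y ∈ T, p i y = 0 := by
    intro i hi y hy
    have h1 : T ≤ (⨆ m ∈ {m | m ≠ i}, X m).topologicalClosure := by
      rw [hT]
      apply Submodule.topologicalClosure_mono
      apply iSup₂_le
      intro j hj
      exact le_iSup₂ (f := fun m (_ : m ∈ {m | m ≠ i}) => X m) j (by simp only [Set.mem_Ici] at hj; simp; omega)
    have hy' : y ∈ LinearMap.ker ((p i : E →ₗ[ℝ] E)) := (hp i).2.1 ▸ h1 hy
    simpa using hy'
  have hPT : ∀ y ∈ T, P y = 0 := by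
    intro y hy
    simp only [hPdef, ContinuousLinearMap.coe_sum', Finset.sum_apply]
    apply Finset.sum_eq_zero
    intro i hi
    exact hkerT i (Nat.lt_succ_iff.mp (Finset.mem_range.mp hi)) y hy
  have hfix : ∀ y ∈ (⨆ i ∈ Set.Iio (k + 1), X i), P y = y := by
    intro y hy
    have hle : (⨆ i ∈ Set.Iio (k + 1), X i) ≤
        LinearMap.eqLocus ((P : E →ₗ[ℝ] E)) LinearMap.id := by
      apply iSup₂_le
      intro i hi v hv
      show P v = v
      have : P v = ∑ j ∈ Finset.range (k + 1), p j v := by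
        simp [hPdef]
      rw [this, Finset.sum_eq_single_of_mem i (Finset.mem_range.mpr hi)]
      · exact (hp i).2.2 v hv
      · intro j _ hji
        exact hkill j i (fun h => hji (h ▸ rfl)) v hv
    exact hle hy
  have hsplit : (⨆ n, X n) ≤ (⨆ i ∈ Set.Iio (k + 1), X i) ⊔ (⨆ i ∈ Set.Ici (k + 1), X i) := by
    apply iSup_le
    intro n
    rcases lt_or_ge n (k + 1) with h | h
    · exact le_trans (le_iSup₂ (f := fun i (_ : i ∈ Set.Iio (k + 1)) => X i) n h) le_sup_left
    · exact le_trans (le_iSup₂ (f := fun i (_ : i ∈ Set.Ici (k + 1)) => X i) n h) le_sup_right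
  set δ := Metric.infDist x (A : Set E) with hδdef
  have hRnn : (0 : ℝ) ≤ ‖R‖ := ContinuousLinearMap.opNorm_nonneg R
  have hPnn : (0 : ℝ) ≤ ‖P‖ := ContinuousLinearMap.opNorm_nonneg P
  apply le_of_forall_pos_le_add
  intro ε hε
  set C : ℝ := 1 + ‖R‖ * (2 + ‖P‖) with hCdef
  have hC : 0 < C := by positivity
  set η := ε / C with hηdef
  have hη : 0 < η := div_pos hε hC
  have hεη : η * C = ε := div_mul_cancel₀ ε (ne_of_gt hC)
  -- pick a ∈ A close to x
  have hlt : Metric.infDist x (A : Set E) < δ + η := by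
    rw [← hδdef]; linarith
  obtain ⟨a, haA, hax⟩ :=
    (Metric.infDist_lt_iff ⟨0, A.zero_mem⟩).mp hlt
  -- pick z in the span close to x
  have hxtop : x ∈ (⨆ n, X n).topologicalClosure := by
    rw [hX.2.1]; exact Submodule.mem_top
  have hxcl : x ∈ closure ((⨆ n, X n : Submodule ℝ E) : Set E) := by
    rw [← Submodule.topologicalClosure_coe]; exact hxtop
  obtain ⟨z, hz, hxz⟩ := Metric.mem_closure_iff.mp hxcl η hη
  obtain ⟨u, hu, t, ht, huz⟩ := Submodule.mem_sup.mp (hsplit hz)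
  have htT : t ∈ T := hT ▸ Submodule.le_topologicalClosure _ ht
  have hPz : P z = u := by
    rw [← huz, map_add, hfix u hu, hPT t htT, add_zero]
  have hmem : a + -t ∈ A ⊔ T :=
    add_mem (Submodule.mem_sup_left haA) (Submodule.mem_sup_right (neg_mem htT))
  have hRa : R ⟨a + -t, hmem⟩ = a := hR a haA (-t) (neg_mem htT) hmem
  have h1 : ‖a‖ ≤ ‖R‖ * ‖a - t‖ := by
    calc ‖a‖ = ‖R ⟨a + -t, hmem⟩‖ := by rw [hRa]
    _ ≤ ‖R‖ * ‖(⟨a + -t, hmem⟩ : ↥(A ⊔ T))‖ := R.le_opNorm _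
    _ = ‖R‖ * ‖a - t‖ := by
        congr 1
        show ‖a + -t‖ = ‖a - t‖
        rw [sub_eq_add_neg]
  have hzt : z - t = u := by rw [← huz]; abel
  have h2 : ‖a - t‖ ≤ ‖a - x‖ + ‖x - z‖ + ‖P z‖ := by
    have : a - t = (a - x) + (x - z) + (z - t) := by abel
    rw [this, hzt, ← hPz]
    exact le_trans (norm_add_le _ _) (by gcongr; exact norm_add_le _ _)
  have h3 : ‖P z‖ ≤ ‖P x‖ + ‖P‖ * η := by
    have : ‖P z‖ ≤ ‖P x‖ + ‖P (z - x)‖ := by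
      have : P z = P x + P (z - x) := by rw [map_sub]; abel
      rw [this]; exact norm_add_le _ _
    refine le_trans this ?_
    gcongr
    refine le_trans (P.le_opNorm _) ?_
    gcongr
    rw [← dist_eq_norm, dist_comm]
    exact le_of_lt hxz
  have hax' : ‖x - a‖ < δ + η := by rwa [← dist_eq_norm]
  have haxr : ‖a - x‖ < δ + η := by rwa [norm_sub_rev]
  have hxz' : ‖x - z‖ < η := by rwa [← dist_eq_norm]
  have h4 : ‖a - t‖ ≤ (δ + η) + η + (‖P x‖ + ‖P‖ * η) := by
    refine le_trans h2 ?_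
    have := le_of_lt haxr
    have := le_of_lt hxz'
    linarith
  have h5 : ‖x‖ ≤ ‖x - a‖ + ‖a‖ := by
    have : x = (x - a) + a := by abel
    nth_rewrite 1 [this]
    exact norm_add_le _ _
  have h6 : ‖R‖ * ‖a - t‖ ≤ ‖R‖ * ((δ + η) + η + (‖P x‖ + ‖P‖ * η)) :=
    mul_le_mul_of_nonneg_left h4 hRnn
  have key : ‖x‖ ≤ (δ + η) + ‖R‖ * ((δ + η) + η + (‖P x‖ + ‖P‖ * η)) := by
    have := le_of_lt hax'
    linarith
  have hring : (δ + η) + ‖R‖ * ((δ + η) + η + (‖P x‖ + ‖P‖ * η))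
      = ‖R‖ * ‖P x‖ + δ * (1 + ‖R‖) + η * C := by
    rw [hCdef]; ring
  rw [hring, hεη] at key
  exact key
end

section
/- If (X_n) is a skipped-blocking decomposition of X with SBD constant K = sup_n ‖R_n‖ and asymptotic constant K_∞ = limsup_n ‖R_n‖, then for every x ∈ X: ‖x‖ ≤ K_∞ · limsup_n ‖P_n x‖ and ‖x‖ ≤ K · liminf_n ‖P_n x‖. -/
open Submodule Set Filter Topology

variable {E : Type*} [NormedAddCommGroup E] [NormedSpace ℝ E]

open scoped ENNReal NNReal

/-! Approximate `x` by `y ∈ X[0,k)`. The vector `P_{k+1} x - x` lies in the closed tail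
`X[k+1,∞)`, so the skipped projection `R_k` maps `y + (P_{k+1} x - x)` to `y`, giving
`‖x‖ ≈ ‖y‖ ≤ ‖R_k‖ ‖y + P_{k+1} x - x‖ ≈ ‖R_k‖ ‖P_{k+1} x‖` for all large `k`. Bounding
`‖R_k‖` by `K`, or eventually by any `B > K∞`, and passing to the liminf gives both
estimates (even with liminf in the first one). -/

namespace ENNReal

theorem le_mul_liminf_of_eventually_le_mul_add {α : Type*} {f : Filter α} [f.NeBot]
    {a B : ℝ≥0∞} {u : α → ℝ≥0∞} (hB : B ≠ ⊤)
    (h : ∀ δ : ℝ≥0, 0 < δ → ∀ᶠ k in f, a ≤ B * u k + δ) :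
    a ≤ B * liminf u f := by
  refine ENNReal.le_of_forall_pos_le_add fun δ hδ _ => tsub_le_iff_right.mp ?_
  rw [← liminf_const_mul_of_ne_top hB]
  exact le_liminf_of_le (by isBoundedDefault) <|
    (h δ hδ).mono fun k hk => tsub_le_iff_right.mpr hk

theorem le_ofReal_mul_of_forall_lt {a L : ℝ≥0∞} {b : ℝ} (hb : 0 < b)
    (h : ∀ B, b < B → a ≤ ENNReal.ofReal B * L) : a ≤ ENNReal.ofReal b * L := by
  have hlim : Tendsto (fun B => ENNReal.ofReal B * L) (𝓝[>] b) (𝓝 (ENNReal.ofReal b * L)) :=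
    ENNReal.Tendsto.mul_const
      ((ENNReal.continuous_ofReal.tendsto b).mono_left nhdsWithin_le_nhds)
      (Or.inl (ENNReal.ofReal_pos.mpr hb).ne')
  exact ge_of_tendsto hlim (eventually_nhdsWithin_of_forall fun B hB => h B hB)

end ENNReal

theorem Submodule.eventually_mem_biSup_Iio {R M : Type*} [Semiring R] [AddCommMonoid M]
    [Module R M] {X : ℕ → Submodule R M} {y : M}
    (hy : y ∈ ⨆ n, X n) : ∀ᶠ k in atTop, y ∈ ⨆ i ∈ Iio k, X i := by
  have hmono : Monotone fun k => ⨆ i ∈ Iio k, X i := fun k l hkl =>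
    biSup_mono fun i (hi : i < k) => show i < l by omega
  have hle : (⨆ n, X n) ≤ ⨆ k, ⨆ i ∈ Iio k, X i :=
    iSup_le fun n => le_iSup_of_le (n + 1) (le_iSup₂_of_le n (Nat.lt_succ_self n) le_rfl)
  obtain ⟨k, hk⟩ := (mem_iSup_of_directed _ hmono.directed_le).mp (hle hy)
  exact eventually_atTop.mpr ⟨k, fun l hl => hmono hl hk⟩

theorem skippedNorm_nonneg (X : ℕ → Submodule ℝ E) (m k : ℕ) : 0 ≤ skippedNorm X m k :=
  Real.sInf_nonneg fun _ hC => hC.1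

theorem norm_le_skippedNorm_mul_of_bound {X : ℕ → Submodule ℝ E} {m k : ℕ} {C : ℝ} (hC0 : 0 ≤ C)
    (hC : ∀ a ∈ ⨆ i ∈ Iio m, X i, ∀ b ∈ (⨆ i ∈ Ici (k + 1), X i).topologicalClosure,
      ‖a‖ ≤ C * ‖a + b‖)
    {a b : E} (ha : a ∈ ⨆ i ∈ Iio m, X i) (hb : b ∈ (⨆ i ∈ Ici (k + 1), X i).topologicalClosure) :
    ‖a‖ ≤ skippedNorm X m k * ‖a + b‖ := by
  rcases (norm_nonneg (a + b)).eq_or_lt with hab | hab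
  · simpa [← hab] using hC a ha b hb
  · rw [← div_le_iff₀ hab]
    exact le_csInf ⟨C, hC0, hC⟩ fun C' hC' => (div_le_iff₀ hab).mpr (hC'.2 a ha b hb)

structure IsCoordinateProjections (X : ℕ → Submodule ℝ E) (p : ℕ → E →L[ℝ] E) : Prop where
  ker_eq : ∀ n, LinearMap.ker (p n : E →ₗ[ℝ] E) = (⨆ m ∈ {m | m ≠ n}, X m).topologicalClosure
  apply_of_mem : ∀ n, ∀ y ∈ X n, p n y = y

namespace IsCoordinateProjections

variable {X : ℕ → Submodule ℝ E} {p : ℕ → E →L[ℝ] E}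

theorem apply_eq_zero_of_mem_closure_biSup (hp : IsCoordinateProjections X p)
    {S : Set ℕ} {i : ℕ} (hi : i ∉ S) {z : E} (hz : z ∈ (⨆ j ∈ S, X j).topologicalClosure) :
    p i z = 0 := by
  have hS : (⨆ j ∈ S, X j) ≤ ⨆ m ∈ {m | m ≠ i}, X m :=
    biSup_mono fun j hj => show j ≠ i from fun hji => hi (hji ▸ hj)
  change z ∈ LinearMap.ker (p i : E →ₗ[ℝ] E)
  rw [hp.ker_eq]
  exact topologicalClosure_mono hS hz

theorem sum_range_apply_of_mem_biSup_Iio (hp : IsCoordinateProjections X p)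
    {n : ℕ} {z : E} (hz : z ∈ ⨆ i ∈ Iio n, X i) :
    (∑ i ∈ Finset.range n, p i) z = z := by
  suffices h : (⨆ i ∈ Iio n, X i) ≤
      LinearMap.eqLocus ((∑ i ∈ Finset.range n, p i : E →L[ℝ] E) : E →ₗ[ℝ] E) LinearMap.id from
    h hz
  refine iSup₂_le fun j (hj : j < n) y hy => ?_
  change (∑ i ∈ Finset.range n, p i) y = y
  rw [sum_apply, Finset.sum_eq_single j]
  · exact hp.apply_of_mem j y hy
  · refine fun i _ hij => hp.apply_eq_zero_of_mem_closure_biSup (S := {j}) hij ?_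
    exact le_topologicalClosure _ (mem_iSup_of_mem j (mem_iSup_of_mem rfl hy))
  · exact fun hj' => absurd (Finset.mem_range.mpr hj) hj'

theorem sum_range_apply_of_mem_closure_biSup_Ici (hp : IsCoordinateProjections X p)
    {n : ℕ} {z : E} (hz : z ∈ (⨆ i ∈ Ici n, X i).topologicalClosure) :
    (∑ i ∈ Finset.range n, p i) z = 0 := by
  rw [sum_apply]
  exact Finset.sum_eq_zero fun i hi =>
    hp.apply_eq_zero_of_mem_closure_biSup (fun h : n ≤ i => by simp at hi; omega) hz

theorem sub_sum_range_apply_mem_closure_biSup_Ici (hp : IsCoordinateProjections X p)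
    (hdense : (⨆ n, X n).topologicalClosure = ⊤)
    (n : ℕ) (x : E) :
    x - (∑ i ∈ Finset.range n, p i) x ∈ (⨆ i ∈ Ici n, X i).topologicalClosure := by
  set T := (⨆ i ∈ Ici n, X i).topologicalClosure
  set f : E →L[ℝ] E := ContinuousLinearMap.id ℝ E - ∑ i ∈ Finset.range n, p i
  suffices h : ⊤ ≤ T.comap (f : E →ₗ[ℝ] E) from h (mem_top (x := x))
  rw [← hdense]
  refine topologicalClosure_minimal _ (iSup_le fun j y hy => ?_)
    ((isClosed_topologicalClosure _).preimage f.continuous)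
  change y - (∑ i ∈ Finset.range n, p i) y ∈ T
  rcases lt_or_ge j n with hj | hj
  · have hy' : y ∈ ⨆ i ∈ Iio n, X i := mem_iSup_of_mem j (mem_iSup_of_mem hj hy)
    rw [hp.sum_range_apply_of_mem_biSup_Iio hy', sub_self]
    exact T.zero_mem
  · have hyT : y ∈ T := le_topologicalClosure _ (mem_iSup_of_mem j (mem_iSup_of_mem hj hy))
    rwa [hp.sum_range_apply_of_mem_closure_biSup_Ici hyT, sub_zero]

theorem norm_le_skippedNorm_mul (hp : IsCoordinateProjections X p)
    {m k : ℕ} (hmk : m ≤ k + 1) {a b : E}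
    (ha : a ∈ ⨆ i ∈ Iio m, X i) (hb : b ∈ (⨆ i ∈ Ici (k + 1), X i).topologicalClosure) :
    ‖a‖ ≤ skippedNorm X m k * ‖a + b‖ := by
  -- `‖P_m‖` is an admissible constant: `P_m` fixes `X[0,m)` and kills the tail
  refine norm_le_skippedNorm_mul_of_bound (norm_nonneg (∑ i ∈ Finset.range m, p i))
    (fun a ha b hb => ?_) ha hb
  have hb' : b ∈ (⨆ i ∈ Ici m, X i).topologicalClosure :=
    topologicalClosure_mono (biSup_mono fun i (hi : k + 1 ≤ i) => show m ≤ i by omega) hb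
  calc ‖a‖ = ‖(∑ i ∈ Finset.range m, p i) (a + b)‖ := by
        rw [map_add, hp.sum_range_apply_of_mem_biSup_Iio ha,
          hp.sum_range_apply_of_mem_closure_biSup_Ici hb', add_zero]
    _ ≤ _ := ContinuousLinearMap.le_opNorm _ _

theorem eventually_norm_le_skippedNorm_mul (hp : IsCoordinateProjections X p)
    (hdense : (⨆ n, X n).topologicalClosure = ⊤)
    (x : E) {ε : ℝ} (hε : 0 < ε) :
    ∀ᶠ k in atTop, ‖x‖ ≤
      skippedNorm X k k * (‖(∑ i ∈ Finset.range (k + 1), p i) x‖ + ε) + ε := by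
  obtain ⟨y, hy, hxy⟩ :=
    (dense_iff_topologicalClosure_eq_top.mpr hdense).exists_dist_lt x hε
  rw [dist_eq_norm] at hxy
  filter_upwards [eventually_mem_biSup_Iio hy] with k hk
  set Px := (∑ i ∈ Finset.range (k + 1), p i) x
  have htail : Px - x ∈ (⨆ i ∈ Ici (k + 1), X i).topologicalClosure := by
    simpa only [neg_sub] using
      neg_mem (hp.sub_sum_range_apply_mem_closure_biSup_Ici hdense (k + 1) x)
  have hy_le := hp.norm_le_skippedNorm_mul k.le_succ hk htail
  have hsplit : ‖y + (Px - x)‖ ≤ ‖Px‖ + ε := by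
    calc ‖y + (Px - x)‖ = ‖Px - (x - y)‖ := by congr 1; abel
      _ ≤ ‖Px‖ + ‖x - y‖ := norm_sub_le _ _
      _ ≤ ‖Px‖ + ε := by linarith
  calc ‖x‖ ≤ ‖y‖ + ‖x - y‖ := norm_le_insert' x y
    _ ≤ skippedNorm X k k * (‖Px‖ + ε) + ε := by
        gcongr
        exact hy_le.trans (by gcongr; exact skippedNorm_nonneg X k k)

theorem eventually_one_le_skippedNorm (hp : IsCoordinateProjections X p)
    (hdense : (⨆ n, X n).topologicalClosure = ⊤)
    {x : E} (hx : x ≠ 0) :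
    ∀ᶠ k in atTop, 1 ≤ skippedNorm X k k := by
  obtain ⟨y, hy, hxy⟩ :=
    (dense_iff_topologicalClosure_eq_top.mpr hdense).exists_dist_lt x (norm_pos_iff.mpr hx)
  have hy0 : 0 < ‖y‖ := norm_pos_iff.mpr fun h => by simp [h] at hxy
  filter_upwards [eventually_mem_biSup_Iio hy] with k hk
  have h := hp.norm_le_skippedNorm_mul k.le_succ hk (zero_mem _)
  rw [add_zero] at h
  exact (le_mul_iff_one_le_left hy0).mp h

theorem eventually_enorm_le_mul_add (hp : IsCoordinateProjections X p)
    (hdense : (⨆ n, X n).topologicalClosure = ⊤)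
    {B : ℝ} (hB : 0 ≤ B) (hcB : ∀ᶠ k in atTop, skippedNorm X k k ≤ B) (x : E)
    {δ : ℝ≥0} (hδ : 0 < δ) :
    ∀ᶠ k in atTop,
      ‖x‖ₑ ≤ ENNReal.ofReal B * ‖(∑ i ∈ Finset.range (k + 1), p i) x‖ₑ + δ := by
  have hε : (0 : ℝ) < δ / (B + 1) := by positivity
  filter_upwards [hp.eventually_norm_le_skippedNorm_mul hdense x hε, hcB] with k hk hkB
  set Px := (∑ i ∈ Finset.range (k + 1), p i) x
  have hreal : ‖x‖ ≤ B * ‖Px‖ + δ := by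
    calc ‖x‖ ≤ skippedNorm X k k * (‖Px‖ + δ / (B + 1)) + δ / (B + 1) := hk
      _ ≤ B * (‖Px‖ + δ / (B + 1)) + δ / (B + 1) := by gcongr
      _ = B * ‖Px‖ + δ := by field_simp; ring
  rw [← ofReal_norm, ← ofReal_norm, ← ENNReal.ofReal_mul hB, ← ENNReal.ofReal_coe_nnreal,
    ← ENNReal.ofReal_add (by positivity) δ.coe_nonneg]
  exact ENNReal.ofReal_le_ofReal hreal

end IsCoordinateProjections

theorem stmt9_general (X : ℕ → Submodule ℝ E) (hX : IsSBD X)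
    (p : ℕ → E →L[ℝ] E)
    (hp : ∀ n, LinearMap.range ((p n : E →ₗ[ℝ] E)) = X n ∧
      LinearMap.ker ((p n : E →ₗ[ℝ] E)) = (⨆ m ∈ {m | m ≠ n}, X m).topologicalClosure ∧
      ∀ y ∈ X n, p n y = y)
    (K Kinf : ℝ)
    (hKb : ∀ n, skippedNorm X n n ≤ K)
    (hKinf : Kinf = Filter.limsup (fun n => skippedNorm X n n) Filter.atTop)
    (x : E) :
    (‖x‖₊ : ℝ≥0∞) ≤ ENNReal.ofReal Kinf *
      Filter.limsup (fun n => ((‖(∑ i ∈ Finset.range (n + 1), p i) x‖₊ : ℝ≥0∞)))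
        Filter.atTop ∧
    (‖x‖₊ : ℝ≥0∞) ≤ ENNReal.ofReal K *
      Filter.liminf (fun n => ((‖(∑ i ∈ Finset.range (n + 1), p i) x‖₊ : ℝ≥0∞)))
        Filter.atTop := by
  rcases eq_or_ne x 0 with rfl | hx
  · simp
  have hproj : IsCoordinateProjections X p := ⟨fun n => (hp n).2.1, fun n => (hp n).2.2⟩
  have hdense : (⨆ n, X n).topologicalClosure = ⊤ := hX.1.2.1
  have hbdd : IsBoundedUnder (· ≤ ·) atTop fun n => skippedNorm X n n := isBoundedUnder_of ⟨K, hKb⟩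
  have hliminf : ∀ B, 0 ≤ B → (∀ᶠ k in atTop, skippedNorm X k k ≤ B) →
      (‖x‖₊ : ℝ≥0∞) ≤ ENNReal.ofReal B *
        liminf (fun n => (‖(∑ i ∈ Finset.range (n + 1), p i) x‖₊ : ℝ≥0∞)) atTop :=
    fun B hB hcB => ENNReal.le_mul_liminf_of_eventually_le_mul_add ENNReal.ofReal_ne_top
      fun δ hδ => hproj.eventually_enorm_le_mul_add hdense hB hcB x hδ
  -- `K∞ > 0` matters: `ofReal 0 * ⊤ = 0` in `ℝ≥0∞`
  have hKinf1 : 1 ≤ Kinf := hKinf ▸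
    le_limsup_of_frequently_le (hproj.eventually_one_le_skippedNorm hdense hx).frequently hbdd
  refine ⟨?_, hliminf K ((skippedNorm_nonneg X 0 0).trans (hKb 0)) (.of_forall hKb)⟩
  calc _ ≤ ENNReal.ofReal Kinf * liminf _ atTop :=
        ENNReal.le_ofReal_mul_of_forall_lt (by linarith) fun B hB => hliminf B (by linarith)
          ((eventually_lt_of_limsup_lt (hKinf ▸ hB) hbdd).mono fun _ => le_of_lt)
    _ ≤ _ := by gcongr; exact liminf_le_limsup

/-- For an SBD with projections `p i`, SBD constant
`K = sup_n ‖R_n‖` and asymptotic constant `K∞ = limsup_n ‖R_n‖`, every `x`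
satisfies `‖x‖ ≤ K∞ · limsup ‖P_n x‖` and `‖x‖ ≤ K · liminf ‖P_n x‖`
(the limsup/liminf are taken in `ℝ≥0∞` since `(‖P_n x‖)` may be unbounded). -/
theorem stmt9 [CompleteSpace E] (X : ℕ → Submodule ℝ E) (hX : IsSBD X)
    (p : ℕ → E →L[ℝ] E)
    (hp : ∀ n, LinearMap.range ((p n : E →ₗ[ℝ] E)) = X n ∧
      LinearMap.ker ((p n : E →ₗ[ℝ] E)) = (⨆ m ∈ {m | m ≠ n}, X m).topologicalClosure ∧
      ∀ y ∈ X n, p n y = y)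
    (K Kinf : ℝ)
    (hK : K = ⨆ n, skippedNorm X n n)
    (hKb : ∀ n, skippedNorm X n n ≤ K)
    (hKinf : Kinf = Filter.limsup (fun n => skippedNorm X n n) Filter.atTop)
    (x : E) :
    (‖x‖₊ : ℝ≥0∞) ≤ ENNReal.ofReal Kinf *
      Filter.limsup (fun n => ((‖(∑ i ∈ Finset.range (n + 1), p i) x‖₊ : ℝ≥0∞)))
        Filter.atTop ∧
    (‖x‖₊ : ℝ≥0∞) ≤ ENNReal.ofReal K *
      Filter.liminf (fun n => ((‖(∑ i ∈ Finset.range (n + 1), p i) x‖₊ : ℝ≥0∞)))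
        Filter.atTop :=
  stmt9_general X hX p hp K Kinf hKb hKinf x
end

section
/- Let (X_n) be a DDD of X with predecomposition space Y = [X_n^*] ⊂ X^*. Then Y separates the points of X if and only if ∩_n X[n,∞) = {0}. -/
open Submodule Set Filter Topology

variable {E : Type*} [NormedAddCommGroup E] [NormedSpace ℝ E]

/-! If `x` lies in every tail `X[n,∞)`, it lies in every `[X_m]_{m ≠ n}`, so every `X_n^*`,
and hence `Y`, vanishes at `x`. Conversely, if `x ∉ X[n,∞)`, Hahn–Banach gives a functional `f`
vanishing on `X[n,∞)` with `f x ≠ 0`. Writing `P_k` for the projection onto `X_k` along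
`[X_m]_{m ≠ k}` (continuous because `X_k` is finite-dimensional), `f = ∑_{k<n} f ∘ P_k`, since
both sides agree on every `X_m` and `⋃ X_m` spans a dense subspace; each `f ∘ P_k` lies in
`X_k^*`, so `f ∈ Y`. -/

lemma exists_mem_ann_apply_ne_zero {S : Submodule ℝ E} (hS : IsClosed (S : Set E)) {x : E}
    (hx : x ∉ S) : ∃ f ∈ ann S, f x ≠ 0 := by
  obtain ⟨g, hg⟩ := SeparatingDual.exists_ne_zero (R := ℝ)
    (mt (Submodule.Quotient.mk_eq_zero S).1 hx)
  refine ⟨g ∘L S.mkQL, fun a ha => ?_, hg⟩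
  simp [(Submodule.Quotient.mk_eq_zero S).2 ha]

lemma ContinuousLinearMap.ext_of_topologicalClosure_iSup_eq_top {ι F : Type*}
    [NormedAddCommGroup F] [NormedSpace ℝ F] {X : ι → Submodule ℝ E}
    (hX : (⨆ n, X n).topologicalClosure = ⊤) {f g : E →L[ℝ] F}
    (h : ∀ m, ∀ z ∈ X m, f z = g z) : f = g := by
  have hspan : (⨆ m, X m) ≤ LinearMap.ker (f - g : E →ₗ[ℝ] F) :=
    iSup_le fun m z hz => by simp [h m z hz]
  have hker := topologicalClosure_minimal _ hspan (f - g).isClosed_ker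
  rw [hX] at hker
  ext z
  exact sub_eq_zero.1 (hker (mem_top (x := z)))

section Blocks

variable {X : ℕ → Submodule ℝ E}

lemma le_topologicalClosure_iSup_ne {m k : ℕ} (h : m ≠ k) :
    X m ≤ (⨆ j ∈ {j | j ≠ k}, X j).topologicalClosure :=
  (le_iSup₂_of_le (f := fun j (_ : j ∈ {j | j ≠ k}) => X j) m h le_rfl).trans
    (le_topologicalClosure _)

lemma topologicalClosure_iSup_Ici_succ_le (n : ℕ) :
    (⨆ j ∈ Ici (n + 1), X j).topologicalClosure ≤
      (⨆ j ∈ {j | j ≠ n}, X j).topologicalClosure :=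
  topologicalClosure_mono <| iSup₂_le fun j hj =>
    le_iSup₂_of_le (f := fun j (_ : j ∈ {j | j ≠ n}) => X j) j (by simp at hj ⊢; omega) le_rfl

lemma apply_eq_zero_of_mem_predecomp {x : E}
    (hx : ∀ n, x ∈ (⨆ j ∈ {j | j ≠ n}, X j).topologicalClosure) {y : E →L[ℝ] ℝ}
    (hy : y ∈ predecomp X) : y x = 0 := by
  have hspan : (⨆ n, ann ((⨆ j ∈ {j | j ≠ n}, X j).topologicalClosure)) ≤
      LinearMap.ker (ContinuousLinearMap.apply ℝ ℝ x : (E →L[ℝ] ℝ) →ₗ[ℝ] ℝ) :=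
    iSup_le fun n f hf => hf x (hx n)
  exact topologicalClosure_minimal _ hspan (ContinuousLinearMap.isClosed_ker _) hy

namespace IsDDD

lemma isTopCompl (hX : IsDDD X) (k : ℕ) :
    IsTopCompl (X k) (⨆ j ∈ {j | j ≠ k}, X j).topologicalClosure := by
  obtain ⟨hfd, htotal, hmin⟩ := hX
  have := hfd k
  set M := (⨆ j ∈ {j | j ≠ k}, X j).topologicalClosure
  have hsup : (⨆ m, X m) ≤ M ⊔ X k := iSup_le fun m => by
    rcases eq_or_ne m k with rfl | hmk
    · exact le_sup_right
    · exact le_sup_of_le_left (le_topologicalClosure_iSup_ne hmk)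
  have hcodisj : Codisjoint M (X k) := by
    rw [codisjoint_iff, eq_top_iff, ← htotal]
    exact topologicalClosure_minimal _ hsup
      (isClosed_sup_finiteDimensional M (X k) (isClosed_topologicalClosure _))
  have hcompl : IsCompl M (X k) := ⟨disjoint_iff.2 (inf_comm M (X k) ▸ hmin k), hcodisj⟩
  exact (hcompl.isTopCompl_of_isClosed_of_finiteDimensional (isClosed_topologicalClosure _)).symm

lemma exists_mem_ann_eqOn (hX : IsDDD X) (f : E →L[ℝ] ℝ) (k : ℕ) :
    ∃ g ∈ ann (⨆ j ∈ {j | j ≠ k}, X j).topologicalClosure, ∀ z ∈ X k, g z = f z :=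
  ⟨f ∘L (X k).projectionL _ (hX.isTopCompl k),
    fun z hz => by rw [ContinuousLinearMap.comp_apply, projectionL_apply_eq_zero_of_mem_right _ hz,
      map_zero],
    fun z hz => by simp [projectionL_apply_left _ ⟨z, hz⟩]⟩

lemma mem_predecomp_of_forall_ge (hX : IsDDD X) {f : E →L[ℝ] ℝ} {n : ℕ}
    (hf : ∀ m ≥ n, ∀ z ∈ X m, f z = 0) : f ∈ predecomp X := by
  choose g hg hgf using hX.exists_mem_ann_eqOn f
  have hblock : ∀ k m, ∀ z ∈ X m, g k z = if k = m then f z else 0 := by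
    intro k m z hz
    split_ifs with hkm
    · exact hkm ▸ hgf k z (hkm ▸ hz)
    · exact hg k z (le_topologicalClosure_iSup_ne (Ne.symm hkm) hz)
  have hsum : f = ∑ k ∈ Finset.range n, g k := by
    refine ContinuousLinearMap.ext_of_topologicalClosure_iSup_eq_top hX.2.1 fun m z hz => ?_
    rw [sum_apply, Finset.sum_congr rfl fun k _ => hblock k m z hz,
      Finset.sum_ite_eq' (Finset.range n) m]
    split_ifs with hm
    · rfl
    · exact hf m (by simpa using hm) z hz
  rw [hsum]
  exact Submodule.sum_mem _ fun k _ => le_topologicalClosure _ (mem_iSup_of_mem k (hg k))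

end IsDDD

end Blocks

theorem stmt10_general (X : ℕ → Submodule ℝ E) (hX : IsDDD X) :
    (∀ x : E, x ≠ 0 → ∃ y ∈ predecomp X, y x ≠ 0) ↔
      (⨅ n, (⨆ j ∈ Set.Ici n, X j).topologicalClosure) = ⊥ := by
  constructor
  · intro hsep
    refine eq_bot_iff.2 fun x hx => (mem_bot ℝ).2 ?_
    by_contra hx0
    obtain ⟨y, hy, hyx⟩ := hsep x hx0
    exact hyx (apply_eq_zero_of_mem_predecomp
      (fun n => topologicalClosure_iSup_Ici_succ_le n ((mem_iInf _).1 hx (n + 1))) hy)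
  · intro hbot x hx0
    obtain ⟨n, hn⟩ : ∃ n, x ∉ (⨆ j ∈ Ici n, X j).topologicalClosure := by
      by_contra! h
      exact hx0 ((mem_bot ℝ).1 (hbot ▸ (mem_iInf _).2 h))
    obtain ⟨f, hf, hfx⟩ := exists_mem_ann_apply_ne_zero (isClosed_topologicalClosure _) hn
    refine ⟨f, hX.mem_predecomp_of_forall_ge (n := n) fun m hm z hz => hf z ?_, hfx⟩
    exact le_topologicalClosure _ (le_iSup₂ (f := fun j (_ : j ∈ Ici n) => X j) m hm hz)

/-- For a DDD, the predecomposition space `Y` separates the points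
of `X` iff `⋂_n X[n,∞) = {0}`. -/
theorem stmt10 [CompleteSpace E] (X : ℕ → Submodule ℝ E) (hX : IsDDD X) :
    (∀ x : E, x ≠ 0 → ∃ y ∈ predecomp X, y x ≠ 0) ↔
      (⨅ n, (⨆ j ∈ Set.Ici n, X j).topologicalClosure) = ⊥ :=
  stmt10_general X hX
end

section
/- Let X be a Banach space, φ ∈ X^{**} of norm one with 0 < dist(φ, B_X) = γ < 1 (distance to the image of the closed unit ball of X in X^{**}), and Y = ker φ ⊂ X^*. If x ∈ X has norm one and ‖x − φ‖_{X^{**}} = γ, then for every norm-one x^* ∈ Y, |x^*(x)| ≤ γ < 1; hence Y does not 1-norm X. -/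
open Submodule Set Filter Topology

variable {E : Type*} [NormedAddCommGroup E] [NormedSpace ℝ E]

/-! On `ker φ` the functionals `f ↦ f x` and `f ↦ (x - φ) f` agree, so every `f ∈ ker φ` in the
unit ball sees `x` with size at most `‖x - φ‖ = γ < 1 = ‖x‖`. -/

theorem norm_apply_le_norm_inclusionInDoubleDual_sub_mul {𝕜 F : Type*}
    [NontriviallyNormedField 𝕜] [SeminormedAddCommGroup F] [NormedSpace 𝕜 F]
    (φ : StrongDual 𝕜 (StrongDual 𝕜 F)) (x : F) {f : StrongDual 𝕜 F} (hf : φ f = 0) :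
    ‖f x‖ ≤ ‖NormedSpace.inclusionInDoubleDual 𝕜 F x - φ‖ * ‖f‖ := by
  have hsub : (NormedSpace.inclusionInDoubleDual 𝕜 F x - φ) f = f x := by
    simp [hf]
  exact hsub ▸ (NormedSpace.inclusionInDoubleDual 𝕜 F x - φ).le_opNorm f

theorem sSup_abs_apply_of_mem_ker_le (φ : StrongDual ℝ (StrongDual ℝ E)) (x : E) :
    sSup {r : ℝ | ∃ f : StrongDual ℝ E, φ f = 0 ∧ ‖f‖ ≤ 1 ∧ r = |f x|} ≤
      ‖NormedSpace.inclusionInDoubleDual ℝ E x - φ‖ := by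
  refine Real.sSup_le ?_ (ContinuousLinearMap.opNorm_nonneg _)
  rintro r ⟨f, hf, hf_le, rfl⟩
  calc |f x| ≤ ‖NormedSpace.inclusionInDoubleDual ℝ E x - φ‖ * ‖f‖ :=
        norm_apply_le_norm_inclusionInDoubleDual_sub_mul φ x hf
    _ ≤ ‖NormedSpace.inclusionInDoubleDual ℝ E x - φ‖ :=
        mul_le_of_le_one_right (ContinuousLinearMap.opNorm_nonneg _) hf_le

open NormedSpace in
theorem stmt14_general (φ : StrongDual ℝ (StrongDual ℝ E))
    (γ : ℝ)
    (hγlt : γ < 1)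
    (x : E) (hx : ‖x‖ = 1) (hxγ : ‖inclusionInDoubleDual ℝ E x - φ‖ = γ) :
    (∀ f : StrongDual ℝ E, φ f = 0 → ‖f‖ = 1 → |f x| ≤ γ) ∧
    ¬ (∀ z : E, ‖z‖ = sSup {r : ℝ | ∃ f : StrongDual ℝ E, φ f = 0 ∧ ‖f‖ ≤ 1 ∧ r = |f z|}) := by
  refine ⟨fun f hf hf_norm => ?_, fun h_norming => ?_⟩
  · simpa [hf_norm, hxγ] using norm_apply_le_norm_inclusionInDoubleDual_sub_mul φ x hf
  · have h_le := sSup_abs_apply_of_mem_ker_le φ x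
    rw [← h_norming x, hx, hxγ] at h_le
    linarith

open NormedSpace in
/-- If `φ ∈ X^{**}` has norm one, `0 < dist(φ, B_X) = γ < 1`, and
`Y = ker φ ⊆ X^*`, then any norm-one `x ∈ X` with `‖x - φ‖ = γ` satisfies
`|x^*(x)| ≤ γ < 1` for all norm-one `x^* ∈ Y`; hence `Y` does not 1-norm `X`. -/
theorem stmt14 [CompleteSpace E] (φ : StrongDual ℝ (StrongDual ℝ E)) (hφ : ‖φ‖ = 1)
    (γ : ℝ)
    (hγdist : γ = Metric.infDist φ
      ((inclusionInDoubleDual ℝ E) '' (Metric.closedBall (0 : E) 1)))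
    (hγpos : 0 < γ) (hγlt : γ < 1)
    (x : E) (hx : ‖x‖ = 1) (hxγ : ‖inclusionInDoubleDual ℝ E x - φ‖ = γ) :
    (∀ f : StrongDual ℝ E, φ f = 0 → ‖f‖ = 1 → |f x| ≤ γ) ∧
    ¬ (∀ z : E, ‖z‖ = sSup {r : ℝ | ∃ f : StrongDual ℝ E, φ f = 0 ∧ ‖f‖ ≤ 1 ∧ r = |f z|}) :=
  stmt14_general φ γ hγlt x hx hxγ
end

section
/- Let (X_n) be a DDD of a Banach space X and x ∈ X. Then there exist an increasing sequence (m(i)) and vectors w_i ∈ X[m(i−1)+1, m(i)] such that P_{m(i)} x + w_{i+1} → x in norm, where P_n = Σ_{k≤n} p_k. -/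
open Submodule Set Filter Topology

variable {E : Type*} [NormedAddCommGroup E] [NormedSpace ℝ E]

lemma key_aux (X : ℕ → Submodule ℝ E) (p : ℕ → E →L[ℝ] E)
    (hp : ∀ n, LinearMap.range ((p n : E →ₗ[ℝ] E)) = X n ∧
      LinearMap.ker ((p n : E →ₗ[ℝ] E)) = (⨆ m ∈ {m | m ≠ n}, X m).topologicalClosure ∧
      ∀ y ∈ X n, p n y = y)
    (m N : ℕ) (y : E) (hy : y ∈ ⨆ j ∈ Set.Iic N, X j) :
    y - (∑ j ∈ Finset.range (m + 1), p j) y ∈ ⨆ j ∈ Set.Ioc m N, X j := by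
  have pz : ∀ k j (z : E), z ∈ X j → p k z = if k = j then z else 0 := by
    intro k j z hz
    by_cases h : k = j
    · subst h; simp [(hp k).2.2 z hz]
    · simp only [if_neg h]
      have hle : X j ≤ (⨆ m ∈ {m | m ≠ k}, X m).topologicalClosure := by
        refine le_trans ?_ (Submodule.le_topologicalClosure _)
        exact le_iSup₂ (f := fun m (_ : m ∈ {m | m ≠ k}) => X m) j (Ne.symm h)
      have : z ∈ LinearMap.ker ((p k : E →ₗ[ℝ] E)) := by
        rw [(hp k).2.1]; exact hle hz
      simpa using this
  set T : E →ₗ[ℝ] E :=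
    LinearMap.id - ((∑ j ∈ Finset.range (m + 1), p j : E →L[ℝ] E) : E →ₗ[ℝ] E) with hT
  have hTy : T y = y - (∑ j ∈ Finset.range (m + 1), p j) y := by
    simp [hT]
  have hmap : Submodule.map T (⨆ j ∈ Set.Iic N, X j) ≤ ⨆ j ∈ Set.Ioc m N, X j := by
    rw [Submodule.map_iSup]
    refine iSup_le fun j => ?_
    rw [Submodule.map_iSup]
    refine iSup_le fun hj => ?_
    rintro _ ⟨z, hz, rfl⟩
    have hsum : ∑ k ∈ Finset.range (m + 1), p k z
        = if j ∈ Finset.range (m + 1) then z else 0 := by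
      rw [Finset.sum_congr rfl (fun k _ => pz k j z hz)]
      exact Finset.sum_ite_eq' _ _ _
    have hTz : T z = z - ∑ k ∈ Finset.range (m + 1), p k z := by
      simp [hT]
    by_cases hjm : j ≤ m
    · have : T z = 0 := by
        rw [hTz, hsum, if_pos (Finset.mem_range.mpr (Nat.lt_succ_of_le hjm)), sub_self]
      rw [this]; exact zero_mem _
    · have : T z = z := by
        rw [hTz, hsum, if_neg (by simpa [Finset.mem_range, Nat.lt_succ_iff] using hjm),
          sub_zero]
      rw [this]
      exact le_iSup₂ (f := fun j (_ : j ∈ Set.Ioc m N) => X j) j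
        ⟨Nat.lt_of_not_le hjm, hj⟩ hz
  rw [← hTy]
  exact hmap ⟨y, hy, rfl⟩

/-- For a DDD with projections `p i` and any `x ∈ X`, there are a
strictly increasing sequence `(m i)` and vectors `w i` in the blocks
`X(m i, m (i+1)]` such that `P_{m i} x + w i → x` in norm. -/
theorem stmt16 [CompleteSpace E] (X : ℕ → Submodule ℝ E) (hX : IsDDD X)
    (p : ℕ → E →L[ℝ] E)
    (hp : ∀ n, LinearMap.range ((p n : E →ₗ[ℝ] E)) = X n ∧
      LinearMap.ker ((p n : E →ₗ[ℝ] E)) = (⨆ m ∈ {m | m ≠ n}, X m).topologicalClosure ∧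
      ∀ y ∈ X n, p n y = y)
    (x : E) :
    ∃ m : ℕ → ℕ, StrictMono m ∧ ∃ w : ℕ → E,
      (∀ i, w i ∈ ⨆ j ∈ Set.Ioc (m i) (m (i + 1)), X j) ∧
      Filter.Tendsto
        (fun i => (∑ j ∈ Finset.range (m i + 1), p j) x + w i)
        Filter.atTop (nhds x) := by
  classical
  set Pc : ℕ → E →L[ℝ] E := fun m => ∑ j ∈ Finset.range (m + 1), p j with hPc
  set ε : ℕ → ℕ → ℝ := fun m i => 1 / ((‖Pc m‖ + 1) * (i + 1)) with hε
  have hεpos : ∀ m i, 0 < ε m i := by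
    intro m i
    apply one_div_pos.mpr
    positivity
  -- density
  have hdense : ∀ m i : ℕ, ∃ q : ℕ × E,
      q.2 ∈ ⨆ j ∈ Set.Iic q.1, X j ∧ ‖x - q.2‖ < ε m i := by
    intro m i
    have hx : x ∈ (⨆ n, X n).topologicalClosure := by
      rw [hX.2.1]; trivial
    have hx' : x ∈ closure ((⨆ n, X n : Submodule ℝ E) : Set E) := hx
    rw [Metric.mem_closure_iff] at hx'
    obtain ⟨y, hy, hdy⟩ := hx' _ (hεpos m i)
    obtain ⟨s, hs⟩ := Submodule.mem_iSup_iff_exists_finset.mp hy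
    by_cases hsn : s.Nonempty
    · refine ⟨⟨s.max' hsn, y⟩, ?_, by rwa [dist_eq_norm] at hdy⟩
      have hle : (⨆ j ∈ s, X j) ≤ ⨆ j ∈ Set.Iic (s.max' hsn), X j := by
        refine iSup_le fun j => iSup_le fun hj => ?_
        exact le_iSup₂ (f := fun j (_ : j ∈ Set.Iic (s.max' hsn)) => X j) j (s.le_max' j hj)
      exact hle hs
    · refine ⟨⟨0, y⟩, ?_, by rwa [dist_eq_norm] at hdy⟩
      rw [Finset.not_nonempty_iff_eq_empty] at hsn
      subst hsn
      simp only [Finset.notMem_empty, iSup_false, iSup_bot, Submodule.mem_bot] at hs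
      subst hs; exact zero_mem _
  -- recursive construction of m
  set M : ℕ → ℕ := fun i => Nat.rec 0
    (fun j mj => max (hdense mj j).choose.1 mj + 1) i with hM
  have hMsucc : ∀ i, M (i + 1) = max (hdense (M i) i).choose.1 (M i) + 1 := fun i => rfl
  have hMmono : StrictMono M := by
    apply strictMono_nat_of_lt_succ
    intro i
    rw [hMsucc i]
    exact Nat.lt_succ_of_le (le_max_right _ _)
  set y : ℕ → E := fun i => (hdense (M i) i).choose.2 with hy
  set w : ℕ → E := fun i => y i - Pc (M i) (y i) with hw
  refine ⟨M, hMmono, w, ?_, ?_⟩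
  · intro i
    have hspec := (hdense (M i) i).choose_spec
    have h1 : w i ∈ ⨆ j ∈ Set.Ioc (M i) (hdense (M i) i).choose.1, X j :=
      key_aux X p hp (M i) _ (y i) hspec.1
    have hle : (⨆ j ∈ Set.Ioc (M i) (hdense (M i) i).choose.1, X j)
        ≤ ⨆ j ∈ Set.Ioc (M i) (M (i + 1)), X j := by
      refine iSup_le fun j => iSup_le fun hj => ?_
      refine le_iSup₂ (f := fun j (_ : j ∈ Set.Ioc (M i) (M (i + 1))) => X j) j ⟨hj.1, ?_⟩
      calc j ≤ (hdense (M i) i).choose.1 := hj.2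
      _ ≤ max (hdense (M i) i).choose.1 (M i) + 1 := le_trans (le_max_left _ _) (Nat.le_succ _)
      _ = M (i + 1) := (hMsucc i).symm
    exact hle h1
  · rw [tendsto_iff_norm_sub_tendsto_zero]
    have hbound : ∀ i, ‖Pc (M i) x + w i - x‖ ≤ 1 / (i + 1) := by
      intro i
      have hspec := (hdense (M i) i).choose_spec
      have heq : Pc (M i) x + w i - x = Pc (M i) (x - y i) - (x - y i) := by
        simp only [hw, map_sub]
        abel
      rw [heq]
      have h1 : ‖Pc (M i) (x - y i) - (x - y i)‖ ≤ (‖Pc (M i)‖ + 1) * ‖x - y i‖ := by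
        calc ‖Pc (M i) (x - y i) - (x - y i)‖
            ≤ ‖Pc (M i) (x - y i)‖ + ‖x - y i‖ := norm_sub_le _ _
          _ ≤ ‖Pc (M i)‖ * ‖x - y i‖ + 1 * ‖x - y i‖ := by
              rw [one_mul]
              exact add_le_add ((Pc (M i)).le_opNorm _) le_rfl
          _ = (‖Pc (M i)‖ + 1) * ‖x - y i‖ := by ring
      have h2 : ‖x - y i‖ < ε (M i) i := hspec.2
      have hC : (0:ℝ) < ‖Pc (M i)‖ + 1 := by positivity
      calc ‖Pc (M i) (x - y i) - (x - y i)‖ ≤ (‖Pc (M i)‖ + 1) * ‖x - y i‖ := h1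
        _ ≤ (‖Pc (M i)‖ + 1) * ε (M i) i := by
            exact mul_le_mul_of_nonneg_left h2.le hC.le
        _ = 1 / (i + 1) := by
            rw [hε]
            field_simp
      -- done
    refine squeeze_zero (fun i => norm_nonneg _) hbound ?_
    exact tendsto_one_div_add_atTop_nhds_zero_nat
end
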